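/- arXiv:2501.06363 — 10 statements merged into one kernel-verified Lean document; each statement's English description precedes it below -/
import Mathlib

section
/- Let (λ_i)_{i∈ℕ} be a summable sequence of positive reals, (P_i)_{i∈ℕ} a summable sequence of nonnegative reals, and γ > 0. Set D̃_i = D̃(λ_i, P_i, γ) and R̃_i = R̃(λ_i, P_i, γ). Then (i) for every i, R̃_i = R_cf(λ_i, D̃_i, P_i); and (ii) for every sequence (D_i) of positive reals that is feasible (i.e. D_i > P_i whenever P_i < λ_i) and satisfies Σ_i D_i ≤ Σ_i D̃_i, one has Σ_i R̃_i ≤ Σ_i R_cf(λ_i, D_i, P_i) (as sums in [0,∞]). That is, the allocation (D̃_i) minimizes the total rate among all distortion allocations with the same or smaller total distortion, the perception levels (P_i) being fixed. -/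
open Real

/-- Water-filling distortion allocation `D̃(λ, P, γ)` from Theorem 2 of the paper. -/
noncomputable def Dtilde (l P g : ℝ) : ℝ :=
  if Real.sqrt l - Real.sqrt (l - min l g) ≤ Real.sqrt P then min g l
  else P + 2 * Real.sqrt l * (Real.sqrt l - Real.sqrt P) + g
       - Real.sqrt (4 * l * (Real.sqrt l - Real.sqrt P) ^ 2 + g ^ 2)

/-- Water-filling per-dimension rate `R̃(λ, P, γ)` from Theorem 2 of the paper. -/
noncomputable def Rtilde (l P g : ℝ) : ℝ :=
  if Real.sqrt l - Real.sqrt (l - min l g) ≤ Real.sqrt P then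
    (1 / 2) * max (Real.log (l / g)) 0
  else
    (1 / 2) * Real.log (2 * l * (Real.sqrt l - Real.sqrt P) ^ 2 /
      (g * (Real.sqrt (4 * l * (Real.sqrt l - Real.sqrt P) ^ 2 + g ^ 2) - g)))

/-- Closed-form scalar Gaussian RDPF `R_cf(λ, D, P)` (MSE distortion, squared
Wasserstein-2 perception), with `ν = (√λ − √P)²`. -/
noncomputable def Rcf (l D P : ℝ) : ℝ :=
  if Real.sqrt l - Real.sqrt (l - min l D) ≤ Real.sqrt P then
    (1 / 2) * max (Real.log (l / D)) 0
  else
    (1 / 2) * Real.log (l * (Real.sqrt l - Real.sqrt P) ^ 2 /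
      (l * (Real.sqrt l - Real.sqrt P) ^ 2
        - ((l + (Real.sqrt l - Real.sqrt P) ^ 2 - D) / 2) ^ 2))

private lemma log_sub_le {x y : ℝ} (hx : 0 < x) (hy : 0 < y) :
    Real.log x - Real.log y ≤ x / y - 1 := by
  have h := Real.log_le_sub_one_of_pos (div_pos hx hy)
  rwa [Real.log_div hx.ne' hy.ne'] at h

private lemma case1_ineq {l γ D : ℝ} (hl : 0 < l) (hγ : 0 < γ) (hD : 0 < D) :
    (1/2) * max (Real.log (l/γ)) 0 + min γ l / (2*γ) ≤
      (1/2) * max (Real.log (l/D)) 0 + D/(2*γ) := by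
  have e1 : Real.log (l/γ) = Real.log l - Real.log γ := Real.log_div hl.ne' hγ.ne'
  have e2 : Real.log (l/D) = Real.log l - Real.log D := Real.log_div hl.ne' hD.ne'
  have hmaxD : Real.log (l/D) ≤ max (Real.log (l/D)) 0 := le_max_left _ _
  have hmax0 : (0:ℝ) ≤ max (Real.log (l/D)) 0 := le_max_right _ _
  rcases le_or_gt γ l with hγl | hγl
  · rw [min_eq_left hγl, max_eq_left (Real.log_nonneg ((one_le_div hγ).2 hγl))]
    have e3 : γ/(2*γ) = 1/2 := by field_simp
    rcases le_or_gt D l with hDl | hDl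
    · have h := log_sub_le hD hγ
      have e4 : D/(2*γ) = (D/γ)/2 := by ring
      linarith
    · have h := log_sub_le hl hγ
      have h5 : l/(2*γ) ≤ D/(2*γ) := by gcongr
      have e4 : l/(2*γ) = (l/γ)/2 := by ring
      linarith
  · rw [min_eq_right hγl.le,
      max_eq_right (Real.log_nonpos (by positivity) ((div_le_one hγ).2 hγl.le))]
    rcases le_or_gt D l with hDl | hDl
    · have h := log_sub_le hD hl
      have h2 : (l-D)/(2*γ) ≤ (l-D)/(2*l) := by gcongr <;> linarith
      have e4 : (l-D)/(2*l) = (1 - D/l)/2 := by field_simp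
      have e5 : (l-D)/(2*γ) = l/(2*γ) - D/(2*γ) := by ring
      linarith
    · have h5 : l/(2*γ) ≤ D/(2*γ) := by gcongr
      linarith

private lemma regII {l P γ E : ℝ} (hl : 0 < l) (hP : 0 ≤ P) (hPl : P < l) (hγ : 0 < γ)
    (hY : 0 < l * (Real.sqrt l - Real.sqrt P)^2 - ((l + (Real.sqrt l - Real.sqrt P)^2 - E)/2)^2) :
    (1/2) * Real.log ((Real.sqrt (4*l*(Real.sqrt l - Real.sqrt P)^2 + γ^2) + γ) / (2*γ))
      + (l + (Real.sqrt l - Real.sqrt P)^2 + γ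
          - Real.sqrt (4*l*(Real.sqrt l - Real.sqrt P)^2 + γ^2)) / (2*γ)
    ≤ (1/2) * Real.log (l*(Real.sqrt l - Real.sqrt P)^2 /
        (l*(Real.sqrt l - Real.sqrt P)^2 - ((l + (Real.sqrt l - Real.sqrt P)^2 - E)/2)^2))
      + E/(2*γ) := by
  set a := Real.sqrt l with had
  set b := Real.sqrt P with hbd
  have ha : 0 < a := Real.sqrt_pos.2 hl
  have hb : 0 ≤ b := Real.sqrt_nonneg P
  have hab : b < a := Real.sqrt_lt_sqrt hP hPl
  set ν := (a - b)^2 with hνd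
  have hν : 0 < ν := pow_pos (by linarith) 2
  have hlν : 0 < l*ν := mul_pos hl hν
  set w := Real.sqrt (4*l*ν + γ^2) with hwd
  have hw2 : w^2 = 4*l*ν + γ^2 := Real.sq_sqrt (by positivity)
  have hwγ : γ < w := (Real.lt_sqrt hγ.le).2 (by nlinarith)
  set q := (l + ν - E)/2 with hqd
  set qt := (w - γ)/2 with hqtd
  have hqt : 0 < qt := by rw [hqtd]; linarith
  have hX : 0 < γ*qt := mul_pos hγ hqt
  have hlq : l*ν = qt^2 + γ*qt := by
    have h0 : qt^2 + γ*qt = (w^2 - γ^2)/4 := by rw [hqtd]; ring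
    rw [hw2] at h0; linarith
  have harg : (w + γ)/(2*γ) = l*ν/(γ*qt) := by
    rw [div_eq_div_iff (by positivity : (0:ℝ) < 2*γ).ne' hX.ne', hqtd]
    linear_combination (γ/2) * hw2
  rw [harg]
  have e1 : Real.log (l*ν/(γ*qt)) = Real.log (l*ν) - Real.log (γ*qt) :=
    Real.log_div hlν.ne' hX.ne'
  have e2 : Real.log (l*ν/(l*ν - q^2)) = Real.log (l*ν) - Real.log (l*ν - q^2) :=
    Real.log_div hlν.ne' hY.ne'
  have h3 := log_sub_le hY hX
  have key : (1 - (l*ν - q^2)/(γ*qt))/2 + (E - (l+ν+γ-w))/(2*γ)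
      = (q - qt)^2/(2*(γ*qt)) := by
    have hE : E = l + ν - 2*q := by rw [hqd]; ring
    have hw' : w = γ + 2*qt := by rw [hqtd]; ring
    rw [hE, hw', hlq]
    field_simp
    ring
  have hkey2 : (0:ℝ) ≤ (q - qt)^2/(2*(γ*qt)) := by positivity
  have e3 : (E - (l+ν+γ-w))/(2*γ) = E/(2*γ) - (l+ν+γ-w)/(2*γ) := by ring
  linarith


private lemma cond_of_le {l P D : ℝ} (hlP : l ≤ P) :
    Real.sqrt l - Real.sqrt (l - min l D) ≤ Real.sqrt P := by
  have h1 : Real.sqrt l ≤ Real.sqrt P := Real.sqrt_le_sqrt hlP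
  have h2 : 0 ≤ Real.sqrt (l - min l D) := Real.sqrt_nonneg _
  linarith

private lemma cond_iff {l P D : ℝ} (hl : 0 < l) (hP : 0 ≤ P) (hPl : P < l) (hD : 0 < D) :
    (Real.sqrt l - Real.sqrt (l - min l D) ≤ Real.sqrt P) ↔
      D ≤ l - (Real.sqrt l - Real.sqrt P) ^ 2 := by
  have hsP : Real.sqrt P < Real.sqrt l := Real.sqrt_lt_sqrt hP hPl
  have hν : 0 < (Real.sqrt l - Real.sqrt P) ^ 2 := pow_pos (sub_pos.2 hsP) 2
  constructor
  · intro h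
    have h1 : Real.sqrt l - Real.sqrt P ≤ Real.sqrt (l - min l D) := by linarith
    have h2 : (Real.sqrt l - Real.sqrt P) ^ 2 ≤ l - min l D := by
      have hnn : (0:ℝ) ≤ l - min l D := by
        have := min_le_left l D; linarith
      exact (Real.le_sqrt (by linarith) hnn).1 h1
    rcases le_total l D with hld | hld
    · rw [min_eq_left hld] at h2; linarith
    · rw [min_eq_right hld] at h2; linarith
  · intro h
    have hDl : D ≤ l := by linarith
    rw [min_eq_right hDl]
    have h2 : Real.sqrt ((Real.sqrt l - Real.sqrt P) ^ 2) ≤ Real.sqrt (l - D) :=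
      Real.sqrt_le_sqrt (by linarith)
    rw [Real.sqrt_sq (by linarith)] at h2
    linarith

private lemma hPl_of_not_cond {l P γ : ℝ}
    (hc : ¬ (Real.sqrt l - Real.sqrt (l - min l γ) ≤ Real.sqrt P)) : P < l := by
  by_contra hh
  exact hc (cond_of_le (not_lt.1 hh))

private lemma dt_case2 {l P γ : ℝ} (hl : 0 < l) (hP : 0 ≤ P)
    (hc : ¬ (Real.sqrt l - Real.sqrt (l - min l γ) ≤ Real.sqrt P)) :
    Dtilde l P γ = l + (Real.sqrt l - Real.sqrt P)^2 + γ
      - Real.sqrt (4*l*(Real.sqrt l - Real.sqrt P)^2 + γ^2) := by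
  unfold Dtilde
  rw [if_neg hc]
  have ha : (Real.sqrt l)^2 = l := Real.sq_sqrt hl.le
  have hb : (Real.sqrt P)^2 = P := Real.sq_sqrt hP
  have h4 : 4 * l * (Real.sqrt l - Real.sqrt P) ^ 2 + γ ^ 2
      = 4 * Real.sqrt l ^ 2 * (Real.sqrt l - Real.sqrt P) ^ 2 + γ ^ 2 := by rw [ha]
  linear_combination ha - hb

private lemma rtilde_case2 {l P γ : ℝ} (hl : 0 < l) (hP : 0 ≤ P) (hγ : 0 < γ)
    (hc : ¬ (Real.sqrt l - Real.sqrt (l - min l γ) ≤ Real.sqrt P)) :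
    Rtilde l P γ = (1/2) * Real.log
      ((Real.sqrt (4*l*(Real.sqrt l - Real.sqrt P)^2 + γ^2) + γ) / (2*γ)) := by
  have hPl : P < l := hPl_of_not_cond hc
  unfold Rtilde
  rw [if_neg hc]
  congr 1
  congr 1
  have hab : Real.sqrt P < Real.sqrt l := Real.sqrt_lt_sqrt hP hPl
  have hν : 0 < (Real.sqrt l - Real.sqrt P)^2 := pow_pos (sub_pos.2 hab) 2
  set w := Real.sqrt (4*l*(Real.sqrt l - Real.sqrt P)^2 + γ^2) with hwd
  have hw2 : w^2 = 4*l*(Real.sqrt l - Real.sqrt P)^2 + γ^2 := Real.sq_sqrt (by positivity)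
  have hwγ : γ < w := (Real.lt_sqrt hγ.le).2 (by nlinarith [mul_pos hl hν])
  rw [div_eq_div_iff (mul_pos hγ (sub_pos.2 hwγ)).ne' (by positivity : (0:ℝ) < 2*γ).ne']
  linear_combination (-γ) * hw2

private lemma rt_eq {l P γ : ℝ} (hl : 0 < l) (hP : 0 ≤ P) (hγ : 0 < γ) :
    Rtilde l P γ = Rcf l (Dtilde l P γ) P := by
  by_cases hc : Real.sqrt l - Real.sqrt (l - min l γ) ≤ Real.sqrt P
  · have hDt : Dtilde l P γ = min γ l := by unfold Dtilde; rw [if_pos hc]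
    have hmin : min l (min γ l) = min l γ := by
      rcases le_total γ l with h | h
      · rw [min_eq_left h, min_comm]
      · rw [min_eq_right h, min_self, min_eq_left h]
    unfold Rtilde Rcf
    rw [hDt, if_pos hc, if_pos (show Real.sqrt l - Real.sqrt (l - min l (min γ l)) ≤ Real.sqrt P by rw [hmin]; exact hc)]
    rcases le_total γ l with h | h
    · rw [min_eq_left h]
    · rw [min_eq_right h, div_self hl.ne', Real.log_one,
        max_eq_right (Real.log_nonpos (by positivity) ((div_le_one hγ).2 h))]
      simp
  · have hPl : P < l := hPl_of_not_cond hc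
    have hab : Real.sqrt P < Real.sqrt l := Real.sqrt_lt_sqrt hP hPl
    have ha2 : (Real.sqrt l)^2 = l := Real.sq_sqrt hl.le
    have hb2 : (Real.sqrt P)^2 = P := Real.sq_sqrt hP
    have hb : 0 ≤ Real.sqrt P := Real.sqrt_nonneg P
    have hν : 0 < (Real.sqrt l - Real.sqrt P)^2 := pow_pos (sub_pos.2 hab) 2
    set ν := (Real.sqrt l - Real.sqrt P)^2 with hνd
    have hνl : ν ≤ l := by nlinarith
    have hTγ : l - ν < γ := by
      by_contra hh
      push_neg at hh
      exact hc ((cond_iff hl hP hPl hγ).2 (by linarith))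
    set w := Real.sqrt (4*l*ν + γ^2) with hwd
    have hw2 : w^2 = 4*l*ν + γ^2 := Real.sq_sqrt (by positivity)
    have hwγ : γ < w := (Real.lt_sqrt hγ.le).2 (by nlinarith [mul_pos hl hν])
    have hwlt : w < 2*ν + γ := by
      rw [hwd]
      exact (Real.sqrt_lt' (by positivity)).2 (by nlinarith)
    have hDt : Dtilde l P γ = l + ν + γ - w := dt_case2 hl hP hc
    have hE : l - ν < l + ν + γ - w := by linarith
    have hEpos : 0 < l + ν + γ - w := by linarith
    have hcond2 : ¬ (Real.sqrt l - Real.sqrt (l - min l (Dtilde l P γ)) ≤ Real.sqrt P) := by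
      rw [hDt]
      intro hcon
      have := (cond_iff hl hP hPl hEpos).1 hcon
      linarith
    rw [rtilde_case2 hl hP hγ hc]
    unfold Rcf
    rw [if_neg hcond2, hDt, ← hνd, ← hwd]
    congr 1
    congr 1
    have hd1 : l + ν - (l + ν + γ - w) = w - γ := by ring
    have hden : l*ν - ((l + ν - (l + ν + γ - w))/2)^2 = γ*(w-γ)/2 := by
      rw [hd1]
      linear_combination (-(1:ℝ)/4) * hw2
    rw [hden]
    rw [div_eq_div_iff (by positivity : (0:ℝ) < 2*γ).ne'
      (div_pos (mul_pos hγ (sub_pos.2 hwγ)) two_pos).ne']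
    linear_combination (γ/2) * hw2

set_option maxHeartbeats 1600000 in
private lemma key_ineq {l P γ D : ℝ} (hl : 0 < l) (hP : 0 ≤ P) (hγ : 0 < γ) (hD : 0 < D)
    (hfeas : P < l → P < D) :
    Rtilde l P γ + Dtilde l P γ / (2*γ) ≤ max (Rcf l D P) 0 + D/(2*γ) := by
  by_cases hc : Real.sqrt l - Real.sqrt (l - min l γ) ≤ Real.sqrt P
  · -- D̃ in case 1
    have hRt : Rtilde l P γ = (1/2) * max (Real.log (l/γ)) 0 := by
      unfold Rtilde; rw [if_pos hc]
    have hDt : Dtilde l P γ = min γ l := by unfold Dtilde; rw [if_pos hc]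
    rw [hRt, hDt]
    by_cases hcd : Real.sqrt l - Real.sqrt (l - min l D) ≤ Real.sqrt P
    · have hRcf : Rcf l D P = (1/2) * max (Real.log (l/D)) 0 := by
        unfold Rcf; rw [if_pos hcd]
      have h1 := case1_ineq hl hγ hD (D := D)
      have h2 : (1/2) * max (Real.log (l/D)) 0 ≤ max (Rcf l D P) 0 := by
        rw [hRcf]; exact le_max_left _ _
      linarith
    · -- Rcf in case 2 while D̃ in case 1: so P < l and γ ≤ l - ν < D
      have hPl : P < l := hPl_of_not_cond hcd
      have hPD : P < D := hfeas hPl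
      have hγT : γ ≤ l - (Real.sqrt l - Real.sqrt P)^2 := (cond_iff hl hP hPl hγ).1 hc
      have hab : Real.sqrt P < Real.sqrt l := Real.sqrt_lt_sqrt hP hPl
      have ha2 : (Real.sqrt l)^2 = l := Real.sq_sqrt hl.le
      have hb2 : (Real.sqrt P)^2 = P := Real.sq_sqrt hP
      have hb0 : 0 ≤ Real.sqrt P := Real.sqrt_nonneg P
      have hν : 0 < (Real.sqrt l - Real.sqrt P)^2 := pow_pos (sub_pos.2 hab) 2
      have hγl : γ < l := by linarith
      rw [min_eq_left hγl.le,
        max_eq_left (Real.log_nonneg ((one_le_div hγ).2 hγl.le))]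
      have hRcf : Rcf l D P = (1/2) * Real.log (l*(Real.sqrt l - Real.sqrt P)^2 /
          (l*(Real.sqrt l - Real.sqrt P)^2
            - ((l + (Real.sqrt l - Real.sqrt P)^2 - D)/2)^2)) := by
        unfold Rcf; rw [if_neg hcd]
      set ν := (Real.sqrt l - Real.sqrt P)^2 with hνd
      set q := (l + ν - D)/2 with hqd
      by_cases hY : 0 < l*ν - q^2
      · -- region II
        have hle : (1/2) * Real.log (l*ν/(l*ν - q^2)) ≤ max (Rcf l D P) 0 := by
          rw [hRcf]; exact le_max_left _ _
        have hlν : 0 < l*ν := mul_pos hl hν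
        have hνγ : 0 < ν*γ := mul_pos hν hγ
        have e2 : Real.log (l*ν/(l*ν - q^2)) = Real.log (l*ν) - Real.log (l*ν - q^2) :=
          Real.log_div hlν.ne' hY.ne'
        have elν : Real.log (l*ν) = Real.log l + Real.log ν :=
          Real.log_mul hl.ne' hν.ne'
        have e1 : Real.log (l/γ) = Real.log l - Real.log γ := Real.log_div hl.ne' hγ.ne'
        have eνγ : Real.log (ν*γ) = Real.log ν + Real.log γ :=
          Real.log_mul hν.ne' hγ.ne'
        have h3 := log_sub_le hY hνγ
        have hYD : l*ν - q^2 ≤ D*ν := by nlinarith [sq_nonneg (D - (l - ν))]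
        have h4 : (l*ν - q^2)/(ν*γ) ≤ (D*ν)/(ν*γ) := by gcongr
        have h5 : (D*ν)/(ν*γ) = D/γ := by
          rw [div_eq_div_iff hνγ.ne' hγ.ne']; ring
        have e3 : γ/(2*γ) = 1/2 := by field_simp
        have e4 : D/(2*γ) = (D/γ)/2 := by ring
        linarith
      · -- region III
        push_neg at hY
        have hmax0 : (0:ℝ) ≤ max (Rcf l D P) 0 := le_max_right _ _
        set m := Real.sqrt l * (Real.sqrt l - Real.sqrt P) with hmd
        have hm0 : 0 ≤ m := by
          rw [hmd]; exact mul_nonneg (Real.sqrt_nonneg l) (by linarith)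
        have hm2 : m^2 = l*ν := by
          rw [hmd, hνd]; linear_combination ((Real.sqrt l - Real.sqrt P)^2) * ha2
        have hqm : q < m := by
          have hPid : P = l + ν - 2*m := by
            rw [hmd, hνd]; linear_combination ha2 - hb2
          rw [hqd]; linarith
        have hqneg : q + m ≤ 0 := by
          by_contra hcon
          push_neg at hcon
          nlinarith [mul_pos (sub_pos.2 hqm) hcon]
        have hDge : l + ν + 2*m ≤ D := by
          have : D = l + ν - 2*q := by rw [hqd]; ring
          linarith
        have hDl : l ≤ D := by linarith
        have h := log_sub_le hl hγ
        have e1 : Real.log (l/γ) = Real.log l - Real.log γ := Real.log_div hl.ne' hγ.ne'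
        have e3 : γ/(2*γ) = 1/2 := by field_simp
        have e4 : l/(2*γ) = (l/γ)/2 := by ring
        have h5 : l/(2*γ) ≤ D/(2*γ) := by gcongr
        linarith
  · -- D̃ in case 2
    have hPl : P < l := hPl_of_not_cond hc
    have hPD : P < D := hfeas hPl
    have hab : Real.sqrt P < Real.sqrt l := Real.sqrt_lt_sqrt hP hPl
    have ha2 : (Real.sqrt l)^2 = l := Real.sq_sqrt hl.le
    have hb2 : (Real.sqrt P)^2 = P := Real.sq_sqrt hP
    have hb0 : 0 ≤ Real.sqrt P := Real.sqrt_nonneg P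
    have hν : 0 < (Real.sqrt l - Real.sqrt P)^2 := pow_pos (sub_pos.2 hab) 2
    have hγT : l - (Real.sqrt l - Real.sqrt P)^2 < γ := by
      by_contra hh
      push_neg at hh
      exact hc ((cond_iff hl hP hPl hγ).2 (by linarith))
    rw [rtilde_case2 hl hP hγ hc, dt_case2 hl hP hc]
    by_cases hcd : Real.sqrt l - Real.sqrt (l - min l D) ≤ Real.sqrt P
    · -- D ≤ T : go through E = T
      have hDT : D ≤ l - (Real.sqrt l - Real.sqrt P)^2 := (cond_iff hl hP hPl hD).1 hcd
      have hTpos : 0 < l - (Real.sqrt l - Real.sqrt P)^2 := lt_of_lt_of_le hD hDT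
      have hRcf : Rcf l D P = (1/2) * max (Real.log (l/D)) 0 := by
        unfold Rcf; rw [if_pos hcd]
      -- step 2 : LHS ≤ ½ log(l/T) + T/(2γ)  via regII at E = T
      have hYT : 0 < l * (Real.sqrt l - Real.sqrt P)^2
          - ((l + (Real.sqrt l - Real.sqrt P)^2 - (l - (Real.sqrt l - Real.sqrt P)^2))/2)^2 := by
        have hid : (l + (Real.sqrt l - Real.sqrt P)^2 - (l - (Real.sqrt l - Real.sqrt P)^2))/2
            = (Real.sqrt l - Real.sqrt P)^2 := by ring
        rw [hid]
        nlinarith [mul_pos hν hTpos]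
      have hstep2 := regII (E := l - (Real.sqrt l - Real.sqrt P)^2) hl hP hPl hγ hYT
      have hargT : l * (Real.sqrt l - Real.sqrt P)^2 /
          (l * (Real.sqrt l - Real.sqrt P)^2
            - ((l + (Real.sqrt l - Real.sqrt P)^2 - (l - (Real.sqrt l - Real.sqrt P)^2))/2)^2)
          = l / (l - (Real.sqrt l - Real.sqrt P)^2) := by
        have hid : (l + (Real.sqrt l - Real.sqrt P)^2 - (l - (Real.sqrt l - Real.sqrt P)^2))/2
            = (Real.sqrt l - Real.sqrt P)^2 := by ring
        rw [hid]
        rw [div_eq_div_iff (by nlinarith [mul_pos hν hTpos] :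
          (0:ℝ) < l * (Real.sqrt l - Real.sqrt P)^2 - ((Real.sqrt l - Real.sqrt P)^2)^2).ne'
          hTpos.ne']
        ring
      rw [hargT] at hstep2
      -- step 1 : ½ log(l/T) + T/(2γ) ≤ ½ log(l/D) + D/(2γ)
      set T := l - (Real.sqrt l - Real.sqrt P)^2 with hTd
      have h1 := log_sub_le hD hTpos
      have eT : Real.log (l/T) = Real.log l - Real.log T := Real.log_div hl.ne' hTpos.ne'
      have eD : Real.log (l/D) = Real.log l - Real.log D := Real.log_div hl.ne' hD.ne'
      have h2 : (T-D)/(2*γ) ≤ (T-D)/(2*T) := by gcongr <;> linarith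
      have e5 : (T-D)/(2*T) = (1 - D/T)/2 := by field_simp
      have e6 : (T-D)/(2*γ) = T/(2*γ) - D/(2*γ) := by ring
      have hstep1 : (1/2) * Real.log (l/T) + T/(2*γ) ≤ (1/2) * Real.log (l/D) + D/(2*γ) := by
        linarith
      have hle : (1/2) * max (Real.log (l/D)) 0 ≤ max (Rcf l D P) 0 := by
        rw [hRcf]; exact le_max_left _ _
      have hmaxD : Real.log (l/D) ≤ max (Real.log (l/D)) 0 := le_max_left _ _
      linarith
    · by_cases hY : 0 < l * (Real.sqrt l - Real.sqrt P)^2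
          - ((l + (Real.sqrt l - Real.sqrt P)^2 - D)/2)^2
      · have h := regII (E := D) hl hP hPl hγ hY
        have hRcf : Rcf l D P = (1/2) * Real.log (l*(Real.sqrt l - Real.sqrt P)^2 /
            (l*(Real.sqrt l - Real.sqrt P)^2
              - ((l + (Real.sqrt l - Real.sqrt P)^2 - D)/2)^2)) := by
          unfold Rcf; rw [if_neg hcd]
        have hle : (1/2) * Real.log (l*(Real.sqrt l - Real.sqrt P)^2 /
            (l*(Real.sqrt l - Real.sqrt P)^2
              - ((l + (Real.sqrt l - Real.sqrt P)^2 - D)/2)^2)) ≤ max (Rcf l D P) 0 := by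
          rw [hRcf]; exact le_max_left _ _
        linarith
      · -- region III
        push_neg at hY
        have hmax0 : (0:ℝ) ≤ max (Rcf l D P) 0 := le_max_right _ _
        set ν := (Real.sqrt l - Real.sqrt P)^2 with hνd
        set w := Real.sqrt (4*l*ν + γ^2) with hwd
        have hw2 : w^2 = 4*l*ν + γ^2 := Real.sq_sqrt (by positivity)
        have hwγ : γ < w := (Real.lt_sqrt hγ.le).2 (by nlinarith [mul_pos hl hν])
        set q := (l + ν - D)/2 with hqd
        set m := Real.sqrt l * (Real.sqrt l - Real.sqrt P) with hmd
        have hm0 : 0 ≤ m := by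
          rw [hmd]; exact mul_nonneg (Real.sqrt_nonneg l) (by linarith)
        have hm2 : m^2 = l*ν := by
          rw [hmd, hνd]; linear_combination ((Real.sqrt l - Real.sqrt P)^2) * ha2
        have hqm : q < m := by
          have hPid : P = l + ν - 2*m := by
            rw [hmd, hνd]; linear_combination ha2 - hb2
          rw [hqd]; linarith
        have hqneg : q + m ≤ 0 := by
          by_contra hcon
          push_neg at hcon
          nlinarith [mul_pos (sub_pos.2 hqm) hcon]
        have hDge : l + ν + 2*m ≤ D := by
          have : D = l + ν - 2*q := by rw [hqd]; ring
          linarith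
        have hwγ2 : 0 < w + γ := by linarith
        have h3 := log_sub_le hwγ2 (by positivity : (0:ℝ) < 2*γ)
        have e1 : Real.log ((w+γ)/(2*γ)) = Real.log (w+γ) - Real.log (2*γ) :=
          Real.log_div hwγ2.ne' (by positivity : (0:ℝ) < 2*γ).ne'
        have e9 : (1/2)*((w+γ)/(2*γ) - 1) + (l+ν+γ-w)/(2*γ)
            = (l + ν - (w-γ)/2)/(2*γ) := by field_simp; ring
        have e10 : (l + ν - (w-γ)/2)/(2*γ) ≤ D/(2*γ) := by gcongr <;> linarith
        linarith

private lemma rtilde_nonneg {l P γ : ℝ} (hl : 0 < l) (hP : 0 ≤ P) (hγ : 0 < γ) :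
    0 ≤ Rtilde l P γ := by
  by_cases hc : Real.sqrt l - Real.sqrt (l - min l γ) ≤ Real.sqrt P
  · unfold Rtilde; rw [if_pos hc]
    exact mul_nonneg (by norm_num) (le_max_right _ _)
  · rw [rtilde_case2 hl hP hγ hc]
    have hPl : P < l := hPl_of_not_cond hc
    have hab : Real.sqrt P < Real.sqrt l := Real.sqrt_lt_sqrt hP hPl
    have hν : 0 < (Real.sqrt l - Real.sqrt P)^2 := pow_pos (sub_pos.2 hab) 2
    set w := Real.sqrt (4*l*(Real.sqrt l - Real.sqrt P)^2 + γ^2) with hwd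
    have hwγ : γ < w := (Real.lt_sqrt hγ.le).2 (by nlinarith [mul_pos hl hν])
    exact mul_nonneg (by norm_num)
      (Real.log_nonneg ((one_le_div (by positivity)).2 (by linarith)))

private lemma dtilde_nonneg {l P γ : ℝ} (hl : 0 < l) (hP : 0 ≤ P) (hγ : 0 < γ) :
    0 ≤ Dtilde l P γ := by
  by_cases hc : Real.sqrt l - Real.sqrt (l - min l γ) ≤ Real.sqrt P
  · unfold Dtilde; rw [if_pos hc]
    exact le_min hγ.le hl.le
  · rw [dt_case2 hl hP hc]
    have hPl : P < l := hPl_of_not_cond hc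
    have hab : Real.sqrt P < Real.sqrt l := Real.sqrt_lt_sqrt hP hPl
    have ha2 : (Real.sqrt l)^2 = l := Real.sq_sqrt hl.le
    have hb2 : (Real.sqrt P)^2 = P := Real.sq_sqrt hP
    have hν : 0 < (Real.sqrt l - Real.sqrt P)^2 := pow_pos (sub_pos.2 hab) 2
    set ν := (Real.sqrt l - Real.sqrt P)^2 with hνd
    set m := Real.sqrt l * (Real.sqrt l - Real.sqrt P) with hmd
    have hm0 : 0 ≤ m := by
      rw [hmd]; exact mul_nonneg (Real.sqrt_nonneg l) (by linarith)
    have hm2 : m^2 = l*ν := by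
      rw [hmd, hνd]; linear_combination ((Real.sqrt l - Real.sqrt P)^2) * ha2
    have hPid : P = l + ν - 2*m := by
      rw [hmd, hνd]; linear_combination ha2 - hb2
    have hwle : Real.sqrt (4*l*ν + γ^2) ≤ 2*m + γ := by
      have h1 : 4*l*ν + γ^2 ≤ (2*m+γ)^2 := by nlinarith [mul_nonneg hm0 hγ.le]
      calc Real.sqrt (4*l*ν + γ^2) ≤ Real.sqrt ((2*m+γ)^2) := Real.sqrt_le_sqrt h1
        _ = 2*m + γ := Real.sqrt_sq (by linarith)
    linarith

private lemma dtilde_le {l P γ : ℝ} (hl : 0 < l) (hP : 0 ≤ P) (hγ : 0 < γ) :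
    Dtilde l P γ ≤ P + 2*l := by
  by_cases hc : Real.sqrt l - Real.sqrt (l - min l γ) ≤ Real.sqrt P
  · unfold Dtilde; rw [if_pos hc]
    have := min_le_right γ l
    linarith
  · rw [dt_case2 hl hP hc]
    have hPl : P < l := hPl_of_not_cond hc
    have hab : Real.sqrt P < Real.sqrt l := Real.sqrt_lt_sqrt hP hPl
    have ha2 : (Real.sqrt l)^2 = l := Real.sq_sqrt hl.le
    have hb2 : (Real.sqrt P)^2 = P := Real.sq_sqrt hP
    have hb0 : 0 ≤ Real.sqrt P := Real.sqrt_nonneg P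
    have hν : 0 < (Real.sqrt l - Real.sqrt P)^2 := pow_pos (sub_pos.2 hab) 2
    set ν := (Real.sqrt l - Real.sqrt P)^2 with hνd
    have hνl : ν ≤ l := by nlinarith
    set w := Real.sqrt (4*l*ν + γ^2) with hwd
    have hwγ : γ < w := (Real.lt_sqrt hγ.le).2 (by nlinarith [mul_pos hl hν])
    linarith

private lemma ofReal_max_zero (x : ℝ) : ENNReal.ofReal (max x 0) = ENNReal.ofReal x := by
  rcases le_total x 0 with h | h
  · rw [max_eq_right h, ENNReal.ofReal_of_nonpos h, ENNReal.ofReal_zero]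
  · rw [max_eq_left h]

/-- For fixed perception allocations, the water-filling allocation `D̃_i` minimizes the
total rate among all feasible distortion allocations with the same or smaller total
distortion. -/
theorem optimal_distortion_allocation
    (lam P : ℕ → ℝ) (hlam_pos : ∀ i, 0 < lam i) (hP_nonneg : ∀ i, 0 ≤ P i)
    (hlam_sum : Summable lam) (hP_sum : Summable P)
    (γ : ℝ) (hγ : 0 < γ) :
    (∀ i, Rtilde (lam i) (P i) γ = Rcf (lam i) (Dtilde (lam i) (P i) γ) (P i)) ∧
    (∀ D : ℕ → ℝ, (∀ i, 0 < D i) → (∀ i, P i < lam i → P i < D i) →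
      (∑' i, ENNReal.ofReal (D i)) ≤ (∑' i, ENNReal.ofReal (Dtilde (lam i) (P i) γ)) →
      (∑' i, ENNReal.ofReal (Rtilde (lam i) (P i) γ)) ≤
        (∑' i, ENNReal.ofReal (Rcf (lam i) (D i) (P i)))) := by
  constructor
  · intro i
    exact rt_eq (hlam_pos i) (hP_nonneg i) hγ
  · intro D hDpos hDfeas hsum
    have hDt0 : ∀ i, 0 ≤ Dtilde (lam i) (P i) γ :=
      fun i => dtilde_nonneg (hlam_pos i) (hP_nonneg i) hγ
    have hkey : ∀ i, ENNReal.ofReal (Rtilde (lam i) (P i) γ)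
        + ENNReal.ofReal (Dtilde (lam i) (P i) γ / (2*γ))
        ≤ ENNReal.ofReal (Rcf (lam i) (D i) (P i)) + ENNReal.ofReal (D i / (2*γ)) := by
      intro i
      have h1 := key_ineq (hlam_pos i) (hP_nonneg i) hγ (hDpos i) (hDfeas i)
      have hRt0 := rtilde_nonneg (hlam_pos i) (hP_nonneg i) hγ
      calc ENNReal.ofReal (Rtilde (lam i) (P i) γ)
            + ENNReal.ofReal (Dtilde (lam i) (P i) γ / (2*γ))
          = ENNReal.ofReal (Rtilde (lam i) (P i) γ + Dtilde (lam i) (P i) γ / (2*γ)) :=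
            (ENNReal.ofReal_add hRt0 (div_nonneg (hDt0 i) (by positivity))).symm
        _ ≤ ENNReal.ofReal (max (Rcf (lam i) (D i) (P i)) 0 + D i / (2*γ)) :=
            ENNReal.ofReal_le_ofReal h1
        _ = ENNReal.ofReal (max (Rcf (lam i) (D i) (P i)) 0)
              + ENNReal.ofReal (D i / (2*γ)) :=
            ENNReal.ofReal_add (le_max_right _ _) (div_nonneg (hDpos i).le (by positivity))
        _ = ENNReal.ofReal (Rcf (lam i) (D i) (P i)) + ENNReal.ofReal (D i / (2*γ)) := by
            rw [ofReal_max_zero]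
    have hsum1 : (∑' i, ENNReal.ofReal (Rtilde (lam i) (P i) γ))
        + (∑' i, ENNReal.ofReal (Dtilde (lam i) (P i) γ / (2*γ)))
        ≤ (∑' i, ENNReal.ofReal (Rcf (lam i) (D i) (P i)))
        + (∑' i, ENNReal.ofReal (D i / (2*γ))) := by
      rw [← ENNReal.tsum_add, ← ENNReal.tsum_add]
      exact ENNReal.tsum_le_tsum hkey
    have hscale : ∀ (f : ℕ → ℝ), (∀ i, 0 ≤ f i) →
        (∑' i, ENNReal.ofReal (f i / (2*γ)))
          = (∑' i, ENNReal.ofReal (f i)) * ENNReal.ofReal (1/(2*γ)) := by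
      intro f hf
      rw [← ENNReal.tsum_mul_right]
      apply tsum_congr
      intro i
      rw [← ENNReal.ofReal_mul (hf i)]
      congr 1
      ring
    have hXY : (∑' i, ENNReal.ofReal (D i / (2*γ)))
        ≤ (∑' i, ENNReal.ofReal (Dtilde (lam i) (P i) γ / (2*γ))) := by
      rw [hscale D (fun i => (hDpos i).le), hscale _ hDt0]
      exact mul_le_mul_left hsum _
    have hgsum : Summable (fun i => P i + 2 * lam i) := by
      have := hP_sum.add (hlam_sum.mul_left 2)
      simpa using this
    have hfin : (∑' i, ENNReal.ofReal (Dtilde (lam i) (P i) γ / (2*γ))) ≠ ⊤ := by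
      have hle : (∑' i, ENNReal.ofReal (Dtilde (lam i) (P i) γ / (2*γ)))
          ≤ ∑' i, ENNReal.ofReal ((P i + 2 * lam i) / (2*γ)) := by
        apply ENNReal.tsum_le_tsum
        intro i
        apply ENNReal.ofReal_le_ofReal
        have := dtilde_le (hlam_pos i) (hP_nonneg i) hγ
        gcongr
      have hg2 : Summable (fun i => (P i + 2 * lam i) / (2*γ)) := hgsum.div_const _
      have heq : (∑' i, ENNReal.ofReal ((P i + 2 * lam i) / (2*γ)))
          = ENNReal.ofReal (∑' i, (P i + 2 * lam i) / (2*γ)) :=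
        (ENNReal.ofReal_tsum_of_nonneg (fun i => by
          have h1 := hP_nonneg i
          have h2 := (hlam_pos i).le
          positivity) hg2).symm
      exact ne_top_of_le_ne_top (by rw [heq]; exact ENNReal.ofReal_ne_top) hle
    have hfinal : (∑' i, ENNReal.ofReal (Rtilde (lam i) (P i) γ))
        + (∑' i, ENNReal.ofReal (Dtilde (lam i) (P i) γ / (2*γ)))
        ≤ (∑' i, ENNReal.ofReal (Rcf (lam i) (D i) (P i)))
        + (∑' i, ENNReal.ofReal (Dtilde (lam i) (P i) γ / (2*γ))) :=
      le_trans hsum1 (add_le_add_right hXY _)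
    exact (ENNReal.add_le_add_iff_right hfin).1 hfinal
end

section
/- Let λ > 0, γ > 0, and 0 ≤ P < λ, and set ν = (√λ−√P)² (so ν > 0). Define D̃ = λ + ν + γ − √(γ² + 4λν). Then P < D̃ < λ + ν, the identity λν − ((λ+ν−D̃)/2)² = γ·(λ+ν−D̃)/2 holds, and D̃ is the unique global minimizer over the open interval (P, λ+ν) of the Lagrangian f(D) = (1/2)·log( λν / (λν − ((λ+ν−D)/2)²) ) + D/(2γ). -/
set_option maxHeartbeats 1600000 in
/-- Scalar Lagrangian (KKT) optimality underlying the water-filling solution of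
Theorem 2: with `ν = (√λ − √P)²`, the point `D̃ = λ + ν + γ − √(γ² + 4λν)` lies in
`(P, λ + ν)`, satisfies the stationarity identity
`λν − ((λ+ν−D̃)/2)² = γ·(λ+ν−D̃)/2`, and is the unique global minimizer of the
Lagrangian `f(D) = (1/2)·log(λν / (λν − ((λ+ν−D)/2)²)) + D/(2γ)` on `(P, λ+ν)`. -/
theorem scalar_lagrangian_optimality
    (l γ P : ℝ) (hl : 0 < l) (hγ : 0 < γ) (hP0 : 0 ≤ P) (hPl : P < l) :
    let ν : ℝ := (Real.sqrt l - Real.sqrt P) ^ 2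
    let Dt : ℝ := l + ν + γ - Real.sqrt (γ ^ 2 + 4 * l * ν)
    let f : ℝ → ℝ := fun D =>
      (1 / 2) * Real.log (l * ν / (l * ν - ((l + ν - D) / 2) ^ 2)) + D / (2 * γ)
    P < Dt ∧ Dt < l + ν ∧
      l * ν - ((l + ν - Dt) / 2) ^ 2 = γ * ((l + ν - Dt) / 2) ∧
      ∀ D ∈ Set.Ioo P (l + ν), D ≠ Dt → f Dt < f D := by
  intro ν Dt f
  have hab : Real.sqrt P < Real.sqrt l := Real.sqrt_lt_sqrt hP0 hPl
  have hl2 : Real.sqrt l ^ 2 = l := Real.sq_sqrt hl.le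
  have hP2 : Real.sqrt P ^ 2 = P := Real.sq_sqrt hP0
  have hν : 0 < ν := by
    have : 0 < Real.sqrt l - Real.sqrt P := by linarith
    positivity
  have hνdef : ν = (Real.sqrt l - Real.sqrt P) ^ 2 := rfl
  -- key algebraic fact: 4 l ν = (l + ν - P)^2
  have hsum : l + ν - P = 2 * Real.sqrt l * (Real.sqrt l - Real.sqrt P) := by
    rw [hνdef]; linear_combination hP2 - hl2
  have hprod : l * ν = (Real.sqrt l * (Real.sqrt l - Real.sqrt P)) ^ 2 := by
    rw [hνdef]; linear_combination (-(Real.sqrt l - Real.sqrt P) ^ 2) * hl2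
  have hkey : 4 * (l * ν) = (l + ν - P) ^ 2 := by
    rw [hsum, hprod]; ring
  have hsP : 0 < l + ν - P := by linarith
  set sq : ℝ := Real.sqrt (γ ^ 2 + 4 * l * ν) with hsqdef
  have hsq0 : 0 ≤ sq := Real.sqrt_nonneg _
  have hsq2 : sq ^ 2 = γ ^ 2 + 4 * l * ν := by
    rw [hsqdef]; exact Real.sq_sqrt (by positivity)
  have hDtdef : Dt = l + ν + γ - sq := rfl
  -- sq > γ
  have hsqγ : γ < sq := by
    rw [hsqdef]
    exact (Real.lt_sqrt (by positivity)).mpr (by linarith [mul_pos hl hν])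
  -- sq < γ + (l + ν - P)
  have hsqP : sq < γ + (l + ν - P) := by
    rw [hsqdef]
    refine (Real.sqrt_lt' (by linarith)).mpr ?_
    have hexp : (γ + (l + ν - P)) ^ 2 = γ ^ 2 + 2 * (γ * (l + ν - P)) + (l + ν - P) ^ 2 := by
      ring
    linarith [mul_pos hγ hsP, hkey, hexp]
  have h1 : P < Dt := by rw [hDtdef]; linarith
  have h2 : Dt < l + ν := by rw [hDtdef]; linarith
  -- stationarity identity
  have hstat : l * ν - ((l + ν - Dt) / 2) ^ 2 = γ * ((l + ν - Dt) / 2) := by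
    rw [hDtdef]; linear_combination (-(1 : ℝ) / 4) * hsq2
  refine ⟨h1, h2, hstat, ?_⟩
  intro D hD hne
  obtain ⟨hD1, hD2⟩ := hD
  set t : ℝ := (l + ν - D) / 2 with htdef
  set t0 : ℝ := (l + ν - Dt) / 2 with ht0def
  have hDeq : D = l + ν - 2 * t := by rw [htdef]; ring
  have hDteq : Dt = l + ν - 2 * t0 := by rw [ht0def]; ring
  have ht0pos : 0 < t0 := by rw [ht0def, hDtdef]; linarith
  have htpos : 0 < t := by rw [htdef]; linarith
  have htub : 2 * t < l + ν - P := by rw [htdef]; linarith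
  have hm : 0 < l * ν := mul_pos hl hν
  set A : ℝ := l * ν - t ^ 2 with hAdef
  set A0 : ℝ := l * ν - t0 ^ 2 with hA0def
  have hA0eq : A0 = γ * t0 := hstat
  have hA0pos : 0 < A0 := by rw [hA0eq]; positivity
  have hApos : 0 < A := by
    rw [hAdef]
    have hp := mul_pos (show 0 < l + ν - P - 2 * t by linarith)
      (show 0 < l + ν - P + 2 * t by linarith)
    linarith [hp, hkey]
  have htne : t ≠ t0 := by
    intro h
    exact hne (by rw [hDeq, hDteq, h])
  have hAne : A ≠ A0 := by
    intro h
    have h' : (t0 - t) * (t0 + t) = 0 := by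
      rw [hAdef, hA0def] at h; linear_combination h
    rcases mul_eq_zero.mp h' with h'' | h''
    · exact htne (by linarith)
    · linarith
  have hx1 : A / A0 ≠ 1 := by
    intro h
    rw [div_eq_one_iff_eq hA0pos.ne'] at h
    exact hAne h
  have hlog := Real.log_lt_sub_one_of_pos (div_pos hApos hA0pos) hx1
  rw [Real.log_div hApos.ne' hA0pos.ne'] at hlog
  have hq : A / A0 * A0 = A := div_mul_cancel₀ A hA0pos.ne'
  -- main inequality: γ * (log A - log A0) < 2 * (t0 - t)
  have hmeq : l * ν = γ * t0 + t0 ^ 2 := by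
    have h := hA0eq
    rw [hA0def] at h
    linarith
  have hkey2 : γ * (Real.log A - Real.log A0) < 2 * (t0 - t) := by
    have h3 := mul_lt_mul_of_pos_left hlog hγ
    have e1 : γ * (A / A0 - 1) = (t0 ^ 2 - t ^ 2) / t0 := by
      rw [hA0eq, hAdef, hmeq]
      field_simp
      ring
    have h4 : (t0 ^ 2 - t ^ 2) / t0 ≤ 2 * (t0 - t) := by
      rw [div_le_iff₀ ht0pos]
      have hexp2 : 2 * (t0 - t) * t0 - (t0 ^ 2 - t ^ 2) = (t0 - t) ^ 2 := by ring
      linarith [sq_nonneg (t0 - t), hexp2]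
    rw [e1] at h3
    linarith
  -- rewrite f values
  have hfD : f D = 1 / 2 * (Real.log (l * ν) - Real.log A) + D / (2 * γ) := by
    have hfd0 : f D = 1 / 2 * Real.log (l * ν / (l * ν - ((l + ν - D) / 2) ^ 2)) + D / (2 * γ) := rfl
    rw [hfd0, ← htdef, ← hAdef, Real.log_div hm.ne' hApos.ne']
  have hfDt : f Dt = 1 / 2 * (Real.log (l * ν) - Real.log A0) + Dt / (2 * γ) := by
    have hfd1 : f Dt = 1 / 2 * Real.log (l * ν / (l * ν - ((l + ν - Dt) / 2) ^ 2)) + Dt / (2 * γ) := rfl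
    rw [hfd1, ← ht0def, ← hA0def, Real.log_div hm.ne' hA0pos.ne']
  rw [hfD, hfDt]
  have eD : D / (2 * γ) = (l + ν) / (2 * γ) - t / γ := by
    rw [hDeq]; field_simp
  have eDt : Dt / (2 * γ) = (l + ν) / (2 * γ) - t0 / γ := by
    rw [hDteq]; field_simp
  rw [eD, eDt]
  have hfin : 1 / 2 * (Real.log A - Real.log A0) < t0 / γ - t / γ := by
    rw [show t0 / γ - t / γ = (t0 - t) / γ by ring, lt_div_iff₀ hγ]
    linarith [hkey2]
  linarith
end

section
/- Let λ > 0 and 0 ≤ P < λ, and set ν = (√λ−√P)². Then the function D ↦ (1/2)·log( λν / (λν − ((λ+ν−D)/2)²) ) is strictly decreasing and strictly convex on the open interval (P, λ+ν), and tends to 0 as D → (λ+ν)⁻. -/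
/-- With `ν = (√λ − √P)²`, the perception-active-regime rate
`D ↦ (1/2)·log(λν / (λν − ((λ+ν−D)/2)²))` of the scalar Gaussian RDPF is strictly
decreasing and strictly convex on `(P, λ+ν)`, and tends to `0` as `D → (λ+ν)⁻`. -/
theorem rate_strictAnti_strictConvex_tendsto_zero
    (l P : ℝ) (hl : 0 < l) (hP0 : 0 ≤ P) (hPl : P < l) :
    let ν : ℝ := (Real.sqrt l - Real.sqrt P) ^ 2
    let f : ℝ → ℝ := fun D =>
      (1 / 2) * Real.log (l * ν / (l * ν - ((l + ν - D) / 2) ^ 2))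
    StrictAntiOn f (Set.Ioo P (l + ν)) ∧
      StrictConvexOn ℝ (Set.Ioo P (l + ν)) f ∧
      Filter.Tendsto f (nhdsWithin (l + ν) (Set.Iio (l + ν))) (nhds 0) := by
  intro ν f
  have hsl2 : Real.sqrt l ^ 2 = l := Real.sq_sqrt hl.le
  have hsP2 : Real.sqrt P ^ 2 = P := Real.sq_sqrt hP0
  have hslP : Real.sqrt P < Real.sqrt l := Real.sqrt_lt_sqrt hP0 hPl
  have hν : 0 < ν := pow_pos (sub_pos.2 hslP) 2
  set a : ℝ := l * ν with ha_def
  set c : ℝ := l + ν with hc_def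
  have ha : 0 < a := by positivity
  have hPc : P < c := by rw [hc_def]; linarith
  -- key identity : ((c - P)/2)^2 = a
  have key : ((c - P) / 2) ^ 2 = a := by
    rw [ha_def, hc_def]
    show ((l + (Real.sqrt l - Real.sqrt P) ^ 2 - P) / 2) ^ 2
        = l * (Real.sqrt l - Real.sqrt P) ^ 2
    calc ((l + (Real.sqrt l - Real.sqrt P) ^ 2 - P) / 2) ^ 2
        = ((Real.sqrt l ^ 2 + (Real.sqrt l - Real.sqrt P) ^ 2 - Real.sqrt P ^ 2) / 2) ^ 2 := by
          rw [hsl2, hsP2]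
      _ = Real.sqrt l ^ 2 * (Real.sqrt l - Real.sqrt P) ^ 2 := by ring
      _ = l * (Real.sqrt l - Real.sqrt P) ^ 2 := by rw [hsl2]
  have hgpos : ∀ D ∈ Set.Ioo P c, 0 < a - ((c - D) / 2) ^ 2 := by
    intro D hD
    obtain ⟨h1, h2⟩ := hD
    nlinarith [key]
  -- f in terms of a, c
  have hf_eq : f = fun D => (1 / 2) * Real.log (a / (a - ((c - D) / 2) ^ 2)) := rfl
  -- the inner quadratic g
  set g : ℝ → ℝ := fun D => a - ((c - D) / 2) ^ 2 with hg_def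
  -- StrictAntiOn
  have anti : StrictAntiOn f (Set.Ioo P c) := by
    intro x hx y hy hxy
    have hgx := hgpos x hx
    have hgy := hgpos y hy
    have hgxy : a - ((c - x) / 2) ^ 2 < a - ((c - y) / 2) ^ 2 := by
      nlinarith [hx.2, hy.2]
    have hdiv : a / (a - ((c - y) / 2) ^ 2) < a / (a - ((c - x) / 2) ^ 2) :=
      div_lt_div_of_pos_left ha hgx hgxy
    have hpos : 0 < a / (a - ((c - y) / 2) ^ 2) := div_pos ha hgy
    have := Real.log_lt_log hpos hdiv
    rw [hf_eq]
    simp only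
    linarith
  -- derivative data
  have hg' : ∀ x : ℝ, HasDerivAt g ((c - x) / 2) x := by
    intro x
    have h1 : HasDerivAt (fun D : ℝ => (c - D) / 2) (-1 / 2) x := by
      simpa using ((hasDerivAt_id x).const_sub c).div_const 2
    have h2 : HasDerivAt g (-(((2:ℕ):ℝ) * ((c - x) / 2) ^ (2 - 1) * (-1 / 2))) x :=
      (h1.pow 2).const_sub a
    convert h2 using 1
    ring
  have hf' : ∀ x ∈ Set.Ioo P c, HasDerivAt f ((x - c) / (4 * g x)) x := by
    intro x hx
    have hgx : 0 < g x := hgpos x hx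
    have hinner : HasDerivAt (fun D => a / g D)
        ((0 * g x - a * ((c - x) / 2)) / g x ^ 2) x :=
      (hasDerivAt_const x a).div (hg' x) hgx.ne'
    have hlogpos : 0 < a / g x := div_pos ha hgx
    have hlog := (Real.hasDerivAt_log hlogpos.ne').comp x hinner
    have hmul : HasDerivAt f
        (1 / 2 * ((a / g x)⁻¹ * ((0 * g x - a * ((c - x) / 2)) / g x ^ 2))) x :=
      hlog.const_mul (1 / 2 : ℝ)
    convert hmul using 1
    field_simp
    ring
  set F1 : ℝ → ℝ := fun D => (D - c) / (4 * g D) with hF1_def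
  have hF1' : ∀ x ∈ Set.Ioo P c,
      HasDerivAt F1 ((1 * (4 * g x) - (x - c) * (4 * ((c - x) / 2))) / (4 * g x) ^ 2) x := by
    intro x hx
    have hgx : 0 < g x := hgpos x hx
    exact ((hasDerivAt_id x).sub_const c).div ((hg' x).const_mul 4) (by positivity)
  -- continuity of f on the interval
  have hcont : ∀ x ∈ Set.Ioo P c, ContinuousAt f x := by
    intro x hx
    have hgx : 0 < g x := hgpos x hx
    rw [hf_eq]
    have h1 : ContinuousAt (fun D => a / g D) x := by
      apply ContinuousAt.div continuousAt_const
      · exact (continuousAt_const.sub (((continuousAt_const.sub continuousAt_id).div_const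
          2).pow 2))
      · exact hgx.ne'
    exact continuousAt_const.mul (h1.log (div_pos ha hgx).ne')
  -- StrictConvexOn
  have conv : StrictConvexOn ℝ (Set.Ioo P c) f := by
    apply strictConvexOn_of_deriv2_pos (convex_Ioo P c)
      (fun x hx => (hcont x hx).continuousWithinAt)
    intro x hx
    rw [interior_Ioo] at hx
    have hgx : 0 < g x := hgpos x hx
    have heq : deriv f =ᶠ[nhds x] F1 := by
      filter_upwards [isOpen_Ioo.mem_nhds hx] with y hy
      exact (hf' y hy).deriv
    have h2 : deriv^[2] f x = deriv (deriv f) x := rfl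
    rw [h2, heq.deriv_eq, (hF1' x hx).deriv]
    have hnum : 0 < 1 * (4 * g x) - (x - c) * (4 * ((c - x) / 2)) := by
      have hexp : (x - c) * (4 * ((c - x) / 2)) = -2 * (c - x) ^ 2 := by ring
      rw [hexp]
      nlinarith [hgx, sq_nonneg (c - x)]
    positivity
  -- limit
  have hlim : Filter.Tendsto f (nhdsWithin c (Set.Iio c)) (nhds 0) := by
    have hca : ContinuousAt f c := by
      rw [hf_eq]
      have h1 : ContinuousAt (fun D => a / g D) c := by
        apply ContinuousAt.div continuousAt_const
        · exact (continuousAt_const.sub (((continuousAt_const.sub continuousAt_id).div_const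
            2).pow 2))
        · show g c ≠ 0
          simp [hg_def, ha.ne']
      have h2 : a / (a - ((c - c) / 2) ^ 2) ≠ 0 := by simp [ha.ne']
      exact continuousAt_const.mul (h1.log h2)
    have := hca.continuousWithinAt (s := Set.Iio c) |>.tendsto
    have hfc : f c = 0 := by
      rw [hf_eq]
      simp [hg_def, ha.ne']
    rwa [hfc] at this
  exact ⟨anti, conv, hlim⟩
end

section
/- Let λ > 0. For γ > 0 define D̃₀(γ) = 2λ + γ − √(γ² + 4λ²) and R̃₀(γ) = (1/2)·log( (γ + √(γ² + 4λ²))/(2γ) ), i.e. the water-filling distortion and rate of Theorem 2 evaluated at perception level P = 0. Then for every γ > 0, 0 < D̃₀(γ) < 2λ and R̃₀(γ) = −(1/2)·log( 1 − (1 − D̃₀(γ)/(2λ))² ); that is, the parametric curve (D̃₀(γ), R̃₀(γ)) traces the perfect-realism Gaussian rate-distortion-perception function D ↦ −(1/2)·log(1 − (1 − D/(2λ))²). -/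
/-- At perception level `P = 0` ("perfect realism"), the parametric water-filling
solution of Theorem 2, `D̃₀(γ) = 2λ + γ − √(γ² + 4λ²)` and
`R̃₀(γ) = (1/2)·log((γ + √(γ² + 4λ²))/(2γ))`, traces the perfect-realism Gaussian
rate-distortion-perception function `D ↦ −(1/2)·log(1 − (1 − D/(2λ))²)`. -/
theorem perfect_realism_parametric_curve (l : ℝ) (hl : 0 < l) :
    let D0 : ℝ → ℝ := fun γ => 2 * l + γ - Real.sqrt (γ ^ 2 + 4 * l ^ 2)
    let R0 : ℝ → ℝ := fun γ =>
      (1 / 2) * Real.log ((γ + Real.sqrt (γ ^ 2 + 4 * l ^ 2)) / (2 * γ))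
    ∀ γ : ℝ, 0 < γ →
      (0 < D0 γ ∧ D0 γ < 2 * l) ∧
        R0 γ = -(1 / 2) * Real.log (1 - (1 - D0 γ / (2 * l)) ^ 2) := by
  intro D0 R0 γ hγ
  have hnn : (0:ℝ) ≤ γ ^ 2 + 4 * l ^ 2 := by positivity
  set s := Real.sqrt (γ ^ 2 + 4 * l ^ 2) with hs
  have hs2 : s ^ 2 = γ ^ 2 + 4 * l ^ 2 := Real.sq_sqrt hnn
  have hsn : 0 ≤ s := Real.sqrt_nonneg _
  have hsγ : γ < s := by nlinarith
  have hslt : s < γ + 2 * l := by nlinarith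
  refine ⟨⟨by simp only [D0, ← hs]; linarith, by simp only [D0, ← hs]; linarith⟩, ?_⟩
  have key : 1 - (1 - D0 γ / (2 * l)) ^ 2 = γ * (s - γ) / (2 * l ^ 2) := by
    simp only [D0, ← hs]
    field_simp
    nlinarith
  rw [key]
  simp only [R0, ← hs]
  have harg : (γ + s) / (2 * γ) = (γ * (s - γ) / (2 * l ^ 2))⁻¹ := by
    have hγ' : γ ≠ 0 := ne_of_gt hγ
    have hsγ' : s - γ ≠ 0 := by linarith
    have hl' : l ≠ 0 := ne_of_gt hl
    field_simp
    nlinarith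
  rw [harg, Real.log_inv]
  ring
end

section
/- Let λ > 0 and 0 ≤ P < λ, and set ν = (√λ−√P)² > 0. The map g : (0,∞) → ℝ, g(γ) = λ + ν + γ − √(γ² + 4λν), is continuous and strictly increasing, satisfies g(γ) → P as γ → 0⁺ and g(γ) → λ + ν as γ → ∞, and hence for every D ∈ (P, λ+ν) there exists a unique γ > 0 with g(γ) = D. -/
private lemma lt_sqrt_sq_add (c x : ℝ) (hc : 0 < c) (hx : 0 ≤ x) :
    x < Real.sqrt (x ^ 2 + c) :=
  (Real.lt_sqrt hx).mpr (by linarith)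

private lemma sqrt_diff_lt (c a b : ℝ) (hc : 0 < c) (ha : 0 ≤ a) (hab : a < b) :
    Real.sqrt (b ^ 2 + c) - Real.sqrt (a ^ 2 + c) < b - a := by
  have hb : 0 ≤ b := le_of_lt (lt_of_le_of_lt ha hab)
  have hsb : b < Real.sqrt (b ^ 2 + c) := lt_sqrt_sq_add c b hc hb
  have hsa : a < Real.sqrt (a ^ 2 + c) := lt_sqrt_sq_add c a hc ha
  have h2 : Real.sqrt (b ^ 2 + c) ^ 2 = b ^ 2 + c := Real.sq_sqrt (by positivity)
  have h3 : Real.sqrt (a ^ 2 + c) ^ 2 = a ^ 2 + c := Real.sq_sqrt (by positivity)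
  nlinarith [Real.sqrt_nonneg (a ^ 2 + c), Real.sqrt_nonneg (b ^ 2 + c)]

private lemma tail_tendsto (c : ℝ) (hc : 0 < c) :
    Filter.Tendsto (fun γ : ℝ => γ - Real.sqrt (γ ^ 2 + c)) Filter.atTop (nhds 0) := by
  have hbound : Filter.Tendsto (fun γ : ℝ => -(c / (2 * γ))) Filter.atTop (nhds 0) := by
    rw [show (0 : ℝ) = -0 by ring]
    refine Filter.Tendsto.neg ?_
    exact tendsto_const_nhds.div_atTop
      (Filter.Tendsto.const_mul_atTop (by norm_num : (0:ℝ) < 2) Filter.tendsto_id)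
  refine tendsto_of_tendsto_of_tendsto_of_le_of_le' hbound tendsto_const_nhds ?_ ?_
  · filter_upwards [Filter.eventually_gt_atTop (0 : ℝ)] with γ hγ
    have hpos : (0 : ℝ) ≤ γ + c / (2 * γ) := by positivity
    have hupper : Real.sqrt (γ ^ 2 + c) ≤ γ + c / (2 * γ) := by
      rw [show γ + c / (2 * γ) = Real.sqrt ((γ + c / (2 * γ)) ^ 2) from
        (Real.sqrt_sq hpos).symm]
      apply Real.sqrt_le_sqrt
      have h1 : (0 : ℝ) ≤ (c / (2 * γ)) ^ 2 := by positivity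
      have h2 : γ * (c / (2 * γ)) = c / 2 := by field_simp
      nlinarith
    linarith
  · filter_upwards [Filter.eventually_gt_atTop (0 : ℝ)] with γ hγ
    have : γ ≤ Real.sqrt (γ ^ 2 + c) := le_of_lt (lt_sqrt_sq_add c γ hc hγ.le)
    linarith

/-- With `ν = (√λ − √P)² > 0`, the perception-active-branch distortion allocation
`g(γ) = λ + ν + γ − √(γ² + 4λν)` is continuous and strictly increasing on `(0,∞)`,
tends to `P` as `γ → 0⁺` and to `λ + ν` as `γ → ∞`; hence every distortion budget
`D ∈ (P, λ+ν)` is met by a unique water level `γ > 0`. -/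
theorem water_level_exists_unique
    (l P : ℝ) (hl : 0 < l) (hP0 : 0 ≤ P) (hPl : P < l) :
    let ν : ℝ := (Real.sqrt l - Real.sqrt P) ^ 2
    let g : ℝ → ℝ := fun γ => l + ν + γ - Real.sqrt (γ ^ 2 + 4 * l * ν)
    0 < ν ∧
      ContinuousOn g (Set.Ioi (0 : ℝ)) ∧
      StrictMonoOn g (Set.Ioi (0 : ℝ)) ∧
      Filter.Tendsto g (nhdsWithin 0 (Set.Ioi (0 : ℝ))) (nhds P) ∧
      Filter.Tendsto g Filter.atTop (nhds (l + ν)) ∧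
      ∀ D ∈ Set.Ioo P (l + ν), ∃! γ : ℝ, 0 < γ ∧ g γ = D := by
  intro ν g
  have hsl : Real.sqrt P < Real.sqrt l := Real.sqrt_lt_sqrt hP0 hPl
  have hν : 0 < ν := pow_pos (by linarith) 2
  have hc : (0 : ℝ) < 4 * l * ν := by positivity
  have hgc : Continuous g := by
    apply Continuous.sub
    · continuity
    · exact Real.continuous_sqrt.comp (by continuity)
  have hmono : StrictMonoOn g (Set.Ici (0 : ℝ)) := by
    intro a ha b hb hab
    have := sqrt_diff_lt (4 * l * ν) a b hc ha hab
    simp only [g]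
    linarith
  have hg0 : g 0 = P := by
    have hl2 : Real.sqrt l ^ 2 = l := Real.sq_sqrt hl.le
    have hP2 : Real.sqrt P ^ 2 = P := Real.sq_sqrt hP0
    have hpos : (0 : ℝ) ≤ 2 * Real.sqrt l * (Real.sqrt l - Real.sqrt P) := by
      have := Real.sqrt_nonneg l
      nlinarith
    have h4 : (0 : ℝ) ^ 2 + 4 * l * ν = (2 * Real.sqrt l * (Real.sqrt l - Real.sqrt P)) ^ 2 := by
      simp only [ν]; nlinarith
    simp only [g, h4, Real.sqrt_sq hpos]
    simp only [ν]
    linear_combination hP2 - hl2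
  have h0 : Filter.Tendsto g (nhdsWithin 0 (Set.Ioi (0 : ℝ))) (nhds P) := by
    rw [← hg0]
    exact (hgc.tendsto 0).mono_left nhdsWithin_le_nhds
  have hTop : Filter.Tendsto g Filter.atTop (nhds (l + ν)) := by
    have key := (tail_tendsto (4 * l * ν) hc).const_add (l + ν)
    rw [add_zero] at key
    have hfun : g = fun γ : ℝ => (l + ν) + (γ - Real.sqrt (γ ^ 2 + 4 * l * ν)) := by
      funext γ; simp only [g]; ring
    rw [hfun]
    exact key
  refine ⟨hν, hgc.continuousOn, hmono.mono Set.Ioi_subset_Ici_self, h0, hTop, ?_⟩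
  intro D hD
  obtain ⟨hPD, hDl⟩ := hD
  obtain ⟨M, hMD, hM1⟩ :=
    ((hTop.eventually (eventually_gt_nhds hDl)).and (Filter.eventually_ge_atTop 1)).exists
  have hM0 : (0 : ℝ) ≤ M := by linarith
  have hIVT := intermediate_value_Icc hM0 hgc.continuousOn
  have hmem : D ∈ Set.Icc (g 0) (g M) := ⟨by rw [hg0]; linarith, le_of_lt hMD⟩
  obtain ⟨γ, hγmem, hγeq⟩ := hIVT hmem
  have hγpos : 0 < γ := by
    rcases lt_or_eq_of_le hγmem.1 with h | h
    · exact h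
    · exfalso; rw [← h] at hγeq; rw [hg0] at hγeq; linarith
  refine ⟨γ, ⟨hγpos, hγeq⟩, ?_⟩
  rintro γ' ⟨hγ'pos, hγ'eq⟩
  exact hmono.injOn (le_of_lt hγ'pos) (le_of_lt hγpos) (by rw [hγ'eq, hγeq])
end

section
/- Let (λ_i)_{i∈ℕ} be a summable sequence of positive reals, (P_i)_{i∈ℕ} a summable sequence of nonnegative reals, and γ > 0. For each i let D̃_i = D̃(λ_i, P_i, γ). Then the sequence (D̃_i) is summable and Σ_i D̃_i ≤ Σ_i P_i + 2·Σ_i λ_i. -/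
/-- If `(λ_i)` is summable (trace-class covariance) and `(P_i)` is summable (finite total
perception budget), then the water-filling distortions `D̃_i = D̃(λ_i, P_i, γ)` are
summable, with `Σ_i D̃_i ≤ Σ_i P_i + 2·Σ_i λ_i`, independently of the water level `γ`. -/
theorem total_allocated_distortion_finite
    (lam P : ℕ → ℝ) (hlam_pos : ∀ i, 0 < lam i) (hP_nonneg : ∀ i, 0 ≤ P i)
    (hlam_sum : Summable lam) (hP_sum : Summable P)
    (γ : ℝ) (hγ : 0 < γ) :
    Summable (fun i => Dtilde (lam i) (P i) γ) ∧
      (∑' i, Dtilde (lam i) (P i) γ) ≤ (∑' i, P i) + 2 * ∑' i, lam i := by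
  have key : ∀ i, 0 ≤ Dtilde (lam i) (P i) γ ∧ Dtilde (lam i) (P i) γ ≤ P i + 2 * lam i := by
    intro i
    have hl := hlam_pos i
    have hP := hP_nonneg i
    have hsl := Real.sqrt_nonneg (lam i)
    have hsP := Real.sqrt_nonneg (P i)
    have hsql : Real.sqrt (lam i) ^ 2 = lam i := Real.sq_sqrt hl.le
    unfold Dtilde
    split
    · constructor
      · exact le_min hγ.le hl.le
      · have := min_le_right γ (lam i); linarith
    · rename_i h
      push_neg at h
      have ha : 0 < Real.sqrt (lam i) - Real.sqrt (P i) := by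
        have h0 := Real.sqrt_nonneg (lam i - min (lam i) γ)
        linarith
      set a := Real.sqrt (lam i) - Real.sqrt (P i) with ha_def
      have hexp : 4 * lam i * a ^ 2 + γ ^ 2 ≤ (2 * Real.sqrt (lam i) * a + γ) ^ 2 := by
        nlinarith [mul_nonneg (mul_nonneg hsl ha.le) hγ.le]
      have hub : Real.sqrt (4 * lam i * a ^ 2 + γ ^ 2) ≤ 2 * Real.sqrt (lam i) * a + γ := by
        calc Real.sqrt (4 * lam i * a ^ 2 + γ ^ 2)
            ≤ Real.sqrt ((2 * Real.sqrt (lam i) * a + γ) ^ 2) := Real.sqrt_le_sqrt hexp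
          _ = 2 * Real.sqrt (lam i) * a + γ := by
              rw [Real.sqrt_sq (by nlinarith [mul_nonneg (mul_nonneg hsl hsl) ha.le])]
      have hnn : 0 ≤ 4 * lam i * a ^ 2 + γ ^ 2 := by positivity
      have hs := Real.sqrt_nonneg (4 * lam i * a ^ 2 + γ ^ 2)
      have hsq := Real.sq_sqrt hnn
      have hlb : γ ≤ Real.sqrt (4 * lam i * a ^ 2 + γ ^ 2) := by
        nlinarith [sq_nonneg a]
      constructor
      · linarith
      · nlinarith
  constructor
  · exact Summable.of_nonneg_of_le (fun i => (key i).1) (fun i => (key i).2)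
      (hP_sum.add (hlam_sum.mul_left 2))
  · have hsum : Summable (fun i => Dtilde (lam i) (P i) γ) :=
      Summable.of_nonneg_of_le (fun i => (key i).1) (fun i => (key i).2)
        (hP_sum.add (hlam_sum.mul_left 2))
    calc (∑' i, Dtilde (lam i) (P i) γ) ≤ ∑' i, (P i + 2 * lam i) :=
          Summable.tsum_le_tsum (fun i => (key i).2) hsum (hP_sum.add (hlam_sum.mul_left 2))
      _ = (∑' i, P i) + 2 * ∑' i, lam i := by
          rw [Summable.tsum_add hP_sum (hlam_sum.mul_left 2), tsum_mul_left]
end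

section
/- Let λ > 0 and γ > 0, and let P ≥ 0 satisfy the perception-active condition √P < √λ − √(λ − min(λ,γ)). Set ν = (√λ−√P)² and D̃ = λ + ν + γ − √(γ² + 4λν). Then ν > 0 and P < D̃ < γ; in particular, the distortion allocated to this component is strictly below the classical water level γ, and the reconstruction variance of this component is strictly positive. -/
/-- Remark 2 of the paper (adaptive water level): if the perception constraint is
active, i.e. `√P < √λ − √(λ − min(λ,γ))`, then with `ν = (√λ − √P)²` and
`D̃ = λ + ν + γ − √(γ² + 4λν)` we have `ν > 0` and `P < D̃ < γ`: the allocated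
distortion stays strictly below the classical water level `γ` and the reconstruction
variance of this component is strictly positive. -/
theorem adaptive_water_level
    (l γ P : ℝ) (hl : 0 < l) (hγ : 0 < γ) (hP0 : 0 ≤ P)
    (hactive : Real.sqrt P < Real.sqrt l - Real.sqrt (l - min l γ)) :
    let ν : ℝ := (Real.sqrt l - Real.sqrt P) ^ 2
    let Dt : ℝ := l + ν + γ - Real.sqrt (γ ^ 2 + 4 * l * ν)
    0 < ν ∧ P < Dt ∧ Dt < γ := by
  intro ν Dt
  set s := Real.sqrt l with hs
  set p := Real.sqrt P with hp
  have hp0 : 0 ≤ p := Real.sqrt_nonneg _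
  have hsq : s ^ 2 = l := Real.sq_sqrt hl.le
  have hpq : p ^ 2 = P := Real.sq_sqrt hP0
  have hm0 : 0 ≤ l - min l γ := by
    rcases le_total l γ with h | h <;> simp [min_def, h]
  have hr0 : 0 ≤ Real.sqrt (l - min l γ) := Real.sqrt_nonneg _
  have hps : p < s := lt_of_lt_of_le hactive (by linarith)
  have hνe : ν = (s - p) ^ 2 := rfl
  have hν : 0 < ν := hνe ▸ pow_pos (sub_pos.mpr hps) 2
  -- ν > l - min l γ
  have hsqr : (Real.sqrt (l - min l γ)) ^ 2 = l - min l γ := Real.sq_sqrt hm0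
  have hνgt : l - min l γ < ν := by
    have h1 : Real.sqrt (l - min l γ) < s - p := by linarith
    rw [hνe]; nlinarith [hr0, sub_pos.mpr hps]
  have hνγ : l - ν < γ := lt_of_lt_of_le (by have := min_le_right l γ; linarith) le_rfl
  have hνl : ν ≤ l := by rw [hνe, ← hsq]; nlinarith [hp0, hps.le]
  -- Dt < γ : need l + ν < sqrt (γ^2 + 4 l ν)
  have hDtγ : Dt < γ := by
    have h1 : l + ν < Real.sqrt (γ ^ 2 + 4 * l * ν) := by
      rw [show Real.sqrt (γ ^ 2 + 4 * l * ν) = Real.sqrt (γ ^ 2 + 4 * l * ν) from rfl]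
      have hx : (0:ℝ) ≤ l + ν := by positivity
      rw [show (l + ν < Real.sqrt (γ ^ 2 + 4 * l * ν)) ↔ ((l+ν)^2 < γ ^ 2 + 4 * l * ν)
        from (Real.lt_sqrt hx)]
      nlinarith [hνγ, hνl, hγ]
    simp only [Dt]; linarith
  -- P < Dt : sqrt(γ^2 + 4 l ν) < γ + 2 s (s - p)
  have hPDt : P < Dt := by
    have ha : 0 < 2 * s * (s - p) := by
      have : 0 < s := lt_of_le_of_lt hp0 hps
      nlinarith [sub_pos.mpr hps]
    have h2 : Real.sqrt (γ ^ 2 + 4 * l * ν) < γ + 2 * s * (s - p) := by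
      rw [show (Real.sqrt (γ ^ 2 + 4 * l * ν) < γ + 2 * s * (s - p)) ↔
          (γ ^ 2 + 4 * l * ν < (γ + 2 * s * (s - p))^2)
        from Real.sqrt_lt' (by linarith)]
      have : 4 * l * ν = (2 * s * (s - p))^2 := by rw [← hsq]; ring
      nlinarith [hγ, ha]
    have hlνP : l + ν - P = 2 * s * (s - p) := by
      rw [hνe, ← hsq, ← hpq]; ring
    simp only [Dt]; linarith
  exact ⟨hν, hPDt, hDtγ⟩
end

section
/- Let (Ω, 𝓕, μ) be a probability space and let X, Y : Ω → ℝ be random variables with finite second moments (X, Y ∈ L²(μ)). Then ∫ (X−Y)² dμ ≥ (E[X] − E[Y])² + (√Var(X) − √Var(Y))². -/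
/-!
Centering splits `E[(X - Y)²]` into `(E[X] - E[Y])² + Var(X - Y)`, and
`Var(X - Y) = Var X - 2 Cov(X, Y) + Var Y` is at least `(√Var X - √Var Y)²`
by the Cauchy–Schwarz inequality `Cov(X, Y) ≤ √Var X √Var Y`.
-/

open MeasureTheory ProbabilityTheory

namespace ProbabilityTheory

variable {Ω : Type*} [MeasurableSpace Ω] {μ : Measure Ω} {X Y : Ω → ℝ}

/-- Cauchy–Schwarz: the quadratic `t ↦ Var[t X + Y]` is nonnegative, so its discriminant
`4 Cov(X, Y)² - 4 Var X Var Y` is not positive. -/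
lemma covariance_sq_le_variance_mul_variance [IsFiniteMeasure μ]
    (hX : MemLp X 2 μ) (hY : MemLp Y 2 μ) :
    cov[X, Y; μ] ^ 2 ≤ Var[X; μ] * Var[Y; μ] := by
  have hquad : ∀ t : ℝ, 0 ≤ Var[X; μ] * (t * t) + 2 * cov[X, Y; μ] * t + Var[Y; μ] := by
    intro t
    have h := variance_add (hX.const_smul t) hY
    rw [variance_smul, covariance_smul_left] at h
    linarith [variance_nonneg (t • X + Y) μ]
  have := discrim_le_zero hquad
  rw [discrim] at this
  linarith

lemma covariance_le_sqrt_variance_mul_sqrt_variance [IsFiniteMeasure μ]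
    (hX : MemLp X 2 μ) (hY : MemLp Y 2 μ) :
    cov[X, Y; μ] ≤ √Var[X; μ] * √Var[Y; μ] := by
  rw [← Real.sqrt_mul (variance_nonneg X μ)]
  exact Real.le_sqrt_of_sq_le (covariance_sq_le_variance_mul_variance hX hY)

lemma sq_sqrt_variance_sub_sqrt_variance_le_variance_sub [IsFiniteMeasure μ]
    (hX : MemLp X 2 μ) (hY : MemLp Y 2 μ) :
    (√Var[X; μ] - √Var[Y; μ]) ^ 2 ≤ Var[X - Y; μ] := by
  rw [variance_sub hX hY, sub_sq, Real.sq_sqrt (variance_nonneg X μ),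
    Real.sq_sqrt (variance_nonneg Y μ)]
  linarith [covariance_le_sqrt_variance_mul_sqrt_variance hX hY (μ := μ)]

lemma integral_sq_eq_sq_integral_add_variance [IsProbabilityMeasure μ] (hX : MemLp X 2 μ) :
    ∫ ω, X ω ^ 2 ∂μ = (∫ ω, X ω ∂μ) ^ 2 + Var[X; μ] := by
  rw [variance_eq_sub hX]
  simp only [Pi.pow_apply]
  ring

end ProbabilityTheory

/-- Scalar Gelbrich bound: for square-integrable real random variables `X, Y` on a
probability space, `E[(X−Y)²] ≥ (E[X] − E[Y])² + (√Var(X) − √Var(Y))²`. -/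
theorem scalar_gelbrich_bound
    {Ω : Type*} [MeasurableSpace Ω] (μ : Measure Ω) [IsProbabilityMeasure μ]
    (X Y : Ω → ℝ) (hX : MemLp X 2 μ) (hY : MemLp Y 2 μ) :
    (∫ ω, X ω ∂μ - ∫ ω, Y ω ∂μ) ^ 2
        + (Real.sqrt (variance X μ) - Real.sqrt (variance Y μ)) ^ 2
      ≤ ∫ ω, (X ω - Y ω) ^ 2 ∂μ := by
  have hmean : ∫ ω, (X - Y) ω ∂μ = ∫ ω, X ω ∂μ - ∫ ω, Y ω ∂μ :=
    integral_sub (hX.integrable one_le_two) (hY.integrable one_le_two)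
  have hsplit := integral_sq_eq_sq_integral_add_variance (hX.sub hY)
  rw [hmean] at hsplit
  simp only [Pi.sub_apply] at hsplit
  rw [hsplit]
  gcongr
  exact sq_sqrt_variance_sub_sqrt_variance_le_variance_sub hX hY
end

section
/- Let m₁, m₂ ∈ ℝ, v₁ > 0, v₂ ≥ 0, and let π be the pushforward of the Gaussian measure N(m₁, v₁) on ℝ under the map x ↦ (x, m₂ + √(v₂/v₁)·(x − m₁)). Then π is a probability measure on ℝ × ℝ whose first marginal is N(m₁, v₁) and whose second marginal is N(m₂, v₂), and ∫ (x−y)² dπ(x,y) = (m₁−m₂)² + (√v₁ − √v₂)². -/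
open MeasureTheory ProbabilityTheory
open scoped NNReal ENNReal
open Filter

lemma my_integrable_sq_exp {b : ℝ} (hb : 0 < b) :
    Integrable (fun x : ℝ => x ^ 2 * Real.exp (-b * x ^ 2)) := by
  have := integrable_rpow_mul_exp_neg_mul_sq hb (s := 2) (by norm_num)
  have h2 : ∀ x : ℝ, x ^ (2:ℝ) = x ^ 2 := fun x => by
    rw [show ((2:ℝ) = ((2:ℕ):ℝ)) by norm_num, Real.rpow_natCast]
  simpa [h2] using this

lemma my_integrable_id_exp {b : ℝ} (hb : 0 < b) :
    Integrable (fun x : ℝ => x * Real.exp (-b * x ^ 2)) := by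
  have := integrable_rpow_mul_exp_neg_mul_sq hb (s := 1) (by norm_num)
  simpa using this

lemma my_tendsto {b : ℝ} (hb : 0 < b) :
    Tendsto (fun x : ℝ => x * Real.exp (-b * x ^ 2)) atTop (nhds 0) := by
  have h := rpow_mul_exp_neg_mul_sq_isLittleO_exp_neg hb 1
  simp only [Real.rpow_one] at h
  refine h.trans_tendsto ?_
  have : Tendsto (fun x : ℝ => -(1/2) * x) atTop atBot := by
    apply Filter.Tendsto.const_mul_atTop_of_neg (by norm_num) tendsto_id
  exact Real.tendsto_exp_atBot.comp this

lemma my_integral_sq_exp {b : ℝ} (hb : 0 < b) :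
    ∫ x : ℝ, x ^ 2 * Real.exp (-b * x ^ 2) = Real.sqrt (Real.pi / b) / (2 * b) := by
  have hb2 : (2 * b) ≠ 0 := by positivity
  set g : ℝ → ℝ := fun x => -(x / (2 * b)) * Real.exp (-b * x ^ 2) with hgdef
  have hg : ∀ x : ℝ, HasDerivAt g
      (x ^ 2 * Real.exp (-b * x ^ 2) - (2 * b)⁻¹ * Real.exp (-b * x ^ 2)) x := by
    intro x
    have h1 : HasDerivAt (fun x : ℝ => -b * x ^ 2) (-b * (2 * x)) x := by
      simpa using ((hasDerivAt_pow 2 x).const_mul (-b))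
    have h2 : HasDerivAt (fun x : ℝ => Real.exp (-b * x ^ 2))
        (Real.exp (-b * x ^ 2) * (-b * (2 * x))) x := h1.exp
    have h3 : HasDerivAt (fun x : ℝ => -(x / (2 * b))) (-(1 / (2 * b))) x := by
      exact ((hasDerivAt_id x).div_const (2 * b)).neg
    have : HasDerivAt g _ x := h3.mul h2
    convert this using 1
    field_simp
    ring
  have htend : Tendsto g atTop (nhds 0) := by
    have : g = fun x => (-(2 * b)⁻¹) * (x * Real.exp (-b * x ^ 2)) := by
      ext x; simp [hgdef]; ring
    rw [this]
    simpa using (my_tendsto hb).const_mul (-(2 * b)⁻¹)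
  have I1 := my_integrable_sq_exp hb
  have I3 := integrable_exp_neg_mul_sq hb
  have h0 : ∫ x in Set.Ioi (0 : ℝ),
      (x ^ 2 * Real.exp (-b * x ^ 2) - (2 * b)⁻¹ * Real.exp (-b * x ^ 2)) = 0 - g 0 := by
    refine MeasureTheory.integral_Ioi_of_hasDerivAt_of_tendsto ?_ (fun x _ => hg x)
      ((I1.sub (I3.const_mul _)).integrableOn) htend
    exact ((hg 0).continuousAt).continuousWithinAt
  have hg0 : g 0 = 0 := by simp [hgdef]
  rw [hg0, sub_zero] at h0
  have hsplit : ∫ x in Set.Ioi (0 : ℝ), x ^ 2 * Real.exp (-b * x ^ 2)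
      = ∫ x in Set.Ioi (0 : ℝ), (2 * b)⁻¹ * Real.exp (-b * x ^ 2) := by
    have h := MeasureTheory.integral_sub
      (I1.integrableOn (s := Set.Ioi (0:ℝ)))
      ((I3.const_mul ((2*b)⁻¹)).integrableOn (s := Set.Ioi (0:ℝ)))
    rw [h0] at h
    linarith [h]
  have e1 : ∫ x : ℝ, x ^ 2 * Real.exp (-b * x ^ 2)
      = 2 * ∫ x in Set.Ioi (0 : ℝ), x ^ 2 * Real.exp (-b * x ^ 2) := by
    rw [← integral_comp_abs (f := fun x => x ^ 2 * Real.exp (-b * x ^ 2))]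
    congr 1; ext x; rw [sq_abs]
  have e3 : ∫ x : ℝ, Real.exp (-b * x ^ 2)
      = 2 * ∫ x in Set.Ioi (0 : ℝ), Real.exp (-b * x ^ 2) := by
    rw [← integral_comp_abs (f := fun x => Real.exp (-b * x ^ 2))]
    congr 1; ext x; rw [sq_abs]
  have := integral_gaussian b
  rw [e1, hsplit, MeasureTheory.integral_const_mul, ← mul_assoc, mul_comm (2:ℝ) (2*b)⁻¹, mul_assoc,
    ← e3, this]
  exact inv_mul_eq_div _ _

lemma my_integral_gaussianReal {μ : ℝ} {v : ℝ≥0} (hv : v ≠ 0) (g : ℝ → ℝ) :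
    ∫ x, g x ∂(gaussianReal μ v) = ∫ x, gaussianPDFReal μ v x * g x := by
  rw [gaussianReal_of_var_ne_zero _ hv, gaussianPDF_def]
  simp_rw [ENNReal.ofReal]
  rw [integral_withDensity_eq_integral_smul
    ((measurable_gaussianPDFReal μ v).real_toNNReal) g]
  congr 1
  ext x
  rw [NNReal.smul_def, Real.coe_toNNReal _ (gaussianPDFReal_nonneg μ v x), smul_eq_mul]

lemma my_pdf_eq (v : ℝ≥0) (hv : 0 < v) (x : ℝ) :
    gaussianPDFReal 0 v x = (Real.sqrt (2 * Real.pi * v))⁻¹ * Real.exp (-(2 * (v:ℝ))⁻¹ * x ^ 2) := by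
  rw [gaussianPDFReal]
  congr 1
  rw [sub_zero]
  congr 1
  field_simp

lemma my_second_moment (v : ℝ≥0) (hv : 0 < v) (a d : ℝ) :
    ∫ x, (a * x + d) ^ 2 ∂(gaussianReal 0 v) = a ^ 2 * v + d ^ 2 := by
  have hv' : (0:ℝ) < v := hv
  set b : ℝ := (2 * (v:ℝ))⁻¹ with hbdef
  have hb : 0 < b := by positivity
  rw [my_integral_gaussianReal hv.ne' _]
  have hrw : ∀ x : ℝ, gaussianPDFReal 0 v x * (a * x + d) ^ 2
      = (Real.sqrt (2 * Real.pi * v))⁻¹ *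
        (a ^ 2 * (x ^ 2 * Real.exp (-b * x ^ 2))
          + (2 * a * d) * (x * Real.exp (-b * x ^ 2))
          + d ^ 2 * Real.exp (-b * x ^ 2)) := by
    intro x
    rw [my_pdf_eq v hv]
    ring
  simp_rw [hrw]
  rw [MeasureTheory.integral_const_mul]
  have I1 := my_integrable_sq_exp hb
  have I2 := my_integrable_id_exp hb
  have I3 := integrable_exp_neg_mul_sq hb
  have I12 : Integrable (fun x : ℝ => a ^ 2 * (x ^ 2 * Real.exp (-b * x ^ 2))
      + (2 * a * d) * (x * Real.exp (-b * x ^ 2))) :=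
    (I1.const_mul _).add (I2.const_mul _)
  rw [MeasureTheory.integral_add I12 (I3.const_mul _),
    MeasureTheory.integral_add (I1.const_mul _) (I2.const_mul _)]
  simp_rw [MeasureTheory.integral_const_mul]
  -- odd integral is zero
  have hodd : ∫ x : ℝ, x * Real.exp (-b * x ^ 2) = 0 := by
    have hneg := MeasureTheory.integral_neg_eq_self
      (fun x : ℝ => x * Real.exp (-b * x ^ 2)) volume
    simp only [neg_sq, neg_mul] at hneg
    rw [MeasureTheory.integral_neg] at hneg
    simp only [neg_mul]
    linarith [hneg]
  rw [hodd, my_integral_sq_exp hb, integral_gaussian b]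
  have hπb : Real.pi / b = 2 * Real.pi * v := by
    rw [hbdef]; field_simp
  have h2b : (2 * b)⁻¹ = (v:ℝ) := by
    rw [hbdef]; field_simp
  have hsqrt_pos : 0 < Real.sqrt (2 * Real.pi * v) := by
    apply Real.sqrt_pos.mpr; positivity
  rw [hπb, div_eq_mul_inv, h2b]
  field_simp [hsqrt_pos.ne']
  ring


/-- Optimal (comonotone affine) coupling of two scalar Gaussians: the pushforward of
`N(m₁, v₁)` under `x ↦ (x, m₂ + √(v₂/v₁)·(x − m₁))` is a probability measure on
`ℝ × ℝ` with marginals `N(m₁, v₁)` and `N(m₂, v₂)` and transport cost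
`∫ (x−y)² dπ = (m₁−m₂)² + (√v₁ − √v₂)²`. -/
theorem gaussian_optimal_coupling
    (m₁ m₂ : ℝ) (v₁ v₂ : ℝ≥0) (hv₁ : 0 < v₁) :
    let π : Measure (ℝ × ℝ) :=
      (gaussianReal m₁ v₁).map
        (fun x => (x, m₂ + Real.sqrt ((v₂ : ℝ) / (v₁ : ℝ)) * (x - m₁)))
    IsProbabilityMeasure π ∧
      π.map Prod.fst = gaussianReal m₁ v₁ ∧
      π.map Prod.snd = gaussianReal m₂ v₂ ∧
      ∫ p : ℝ × ℝ, (p.1 - p.2) ^ 2 ∂π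
        = (m₁ - m₂) ^ 2 + (Real.sqrt (v₁ : ℝ) - Real.sqrt (v₂ : ℝ)) ^ 2 := by
  intro π
  have hv₁' : (0:ℝ) < (v₁:ℝ) := hv₁
  set c : ℝ := Real.sqrt ((v₂ : ℝ) / (v₁ : ℝ)) with hcdef
  have hcnn : 0 ≤ c := Real.sqrt_nonneg _
  have hf : Measurable (fun x : ℝ => (x, m₂ + c * (x - m₁))) :=
    measurable_id.prodMk (by fun_prop)
  have hc2 : c ^ 2 = (v₂ : ℝ) / (v₁ : ℝ) := Real.sq_sqrt (by positivity)
  have hcsqrt : c * Real.sqrt (v₁ : ℝ) = Real.sqrt (v₂ : ℝ) := by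
    rw [hcdef, ← Real.sqrt_mul (by positivity), div_mul_cancel₀ _ hv₁'.ne']
  refine ⟨?_, ?_, ?_, ?_⟩
  · exact Measure.isProbabilityMeasure_map hf.aemeasurable
  · rw [Measure.map_map measurable_fst hf]
    exact Measure.map_id
  · rw [Measure.map_map measurable_snd hf]
    have hcomp : (Prod.snd ∘ fun x : ℝ => (x, m₂ + c * (x - m₁)))
        = (fun y : ℝ => (m₂ - c * m₁) + y) ∘ (fun x : ℝ => c * x) := by
      ext x; simp [Function.comp]; ring
    rw [hcomp, ← Measure.map_map (measurable_const_add _) (measurable_const_mul _),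
      gaussianReal_map_const_mul, gaussianReal_map_const_add]
    congr 1
    · ring
    · ext
      simp only [NNReal.coe_mul, NNReal.coe_mk]
      rw [hc2, div_mul_cancel₀ _ hv₁'.ne']
  · show ∫ p : ℝ × ℝ, (p.1 - p.2) ^ 2 ∂((gaussianReal m₁ v₁).map (fun x => (x, m₂ + c * (x - m₁)))) = _
    rw [MeasureTheory.integral_map hf.aemeasurable
      ((by fun_prop : Measurable fun p : ℝ × ℝ => (p.1 - p.2) ^ 2).aestronglyMeasurable)]
    have hmap : gaussianReal m₁ v₁ = (gaussianReal 0 v₁).map (· + m₁) := by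
      rw [gaussianReal_map_add_const, zero_add]
    rw [hmap, MeasureTheory.integral_map (measurable_add_const m₁).aemeasurable
      ((by fun_prop : Measurable fun x : ℝ =>
        ((x, m₂ + c * (x - m₁)).1 - (x, m₂ + c * (x - m₁)).2) ^ 2).aestronglyMeasurable)]
    have hpt : ∀ x : ℝ, (x + m₁ - (m₂ + c * (x + m₁ - m₁))) ^ 2
        = ((1 - c) * x + (m₁ - m₂)) ^ 2 := fun x => by ring
    simp_rw [hpt]
    rw [my_second_moment v₁ hv₁ (1 - c) (m₁ - m₂)]
    have key : (1 - c) ^ 2 * (v₁ : ℝ)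
        = (Real.sqrt (v₁ : ℝ) - Real.sqrt (v₂ : ℝ)) ^ 2 := by
      have h : Real.sqrt (v₁:ℝ) - Real.sqrt (v₂:ℝ) = (1 - c) * Real.sqrt (v₁:ℝ) := by
        rw [sub_mul, one_mul, hcsqrt]
      rw [h, mul_pow, Real.sq_sqrt hv₁'.le]
    rw [key]; ring
end

section
/- Let n ∈ ℕ and for each i < n let μᵢ, νᵢ be probability measures on ℝ with finite second moments. Let μ = ⊗_{i<n} μᵢ and ν = ⊗_{i<n} νᵢ be the product measures on ℝⁿ (functions Fin n → ℝ). Then W₂²(μ, ν) = Σ_{i<n} W₂²(μᵢ, νᵢ), where W₂²(μ,ν) is the infimum over probability measures π on ℝⁿ × ℝⁿ with marginals μ and ν of ∫ Σ_{i<n} (xᵢ − yᵢ)² dπ(x,y), and W₂²(μᵢ,νᵢ) is the corresponding infimum on ℝ × ℝ with cost (x−y)². -/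
open MeasureTheory
open scoped NNReal ENNReal

/-- Squared Wasserstein-2 distance between probability measures on `ℝⁿ` with cost
`Σ_i (xᵢ − yᵢ)²`: infimum of the transport cost over all couplings. -/
noncomputable def W2sqn (n : ℕ) (μ ν : Measure (Fin n → ℝ)) : ℝ≥0∞ :=
  ⨅ (π : Measure ((Fin n → ℝ) × (Fin n → ℝ))) (_ : IsProbabilityMeasure π)
    (_ : π.map Prod.fst = μ) (_ : π.map Prod.snd = ν),
    ∫⁻ p, ENNReal.ofReal (∑ i, (p.1 i - p.2 i) ^ 2) ∂π

/-- Squared Wasserstein-2 distance between probability measures on `ℝ` with cost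
`(x − y)²`: infimum of the transport cost over all couplings. -/
noncomputable def W2sq1 (μ ν : Measure ℝ) : ℝ≥0∞ :=
  ⨅ (π : Measure (ℝ × ℝ)) (_ : IsProbabilityMeasure π)
    (_ : π.map Prod.fst = μ) (_ : π.map Prod.snd = ν),
    ∫⁻ p, ENNReal.ofReal ((p.1 - p.2) ^ 2) ∂π


/-!
Both sides are infima of transport costs. The cost `Σᵢ (xᵢ - yᵢ)²` is a sum of coordinate costs,
so the cost of any coupling of the product measures is the sum of the costs of its coordinate
marginals, which are couplings of the factors; this gives `≥`. Conversely, gluing arbitrary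
coordinate couplings into their product gives a coupling of the product measures whose cost is the
sum of theirs, and choosing them `ε`-optimal gives `≤`.
-/

theorem ENNReal.iInf_pi_sum_le_sum_iInf {ι : Type*} [Fintype ι] {κ : ι → Type*}
    (f : ∀ i, κ i → ℝ≥0∞) :
    ⨅ g : ∀ i, κ i, ∑ i, f i (g i) ≤ ∑ i, ⨅ k, f i k := by
  refine ENNReal.le_of_forall_pos_le_add fun ε hε hfin => ?_
  have hε' : (ε : ℝ≥0∞) / Fintype.card ι ≠ 0 :=
    (ENNReal.div_pos (by exact_mod_cast hε.ne') (ENNReal.natCast_ne_top _)).ne'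
  have hnear : ∀ i, ∃ k, f i k < (⨅ k, f i k) + ε / Fintype.card ι := fun i =>
    iInf_lt_iff.1 <| ENNReal.lt_add_right
      (ENNReal.sum_ne_top.1 hfin.ne i (Finset.mem_univ i)) hε'
  choose g hg using hnear
  calc ⨅ g : ∀ i, κ i, ∑ i, f i (g i)
      ≤ ∑ i, f i (g i) := iInf_le _ g
    _ ≤ ∑ i, ((⨅ k, f i k) + ε / Fintype.card ι) := Finset.sum_le_sum fun i _ => (hg i).le
    _ = (∑ i, ⨅ k, f i k) + Fintype.card ι * (ε / Fintype.card ι) := by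
      rw [Finset.sum_add_distrib, Finset.sum_const, Finset.card_univ, nsmul_eq_mul]
    _ ≤ (∑ i, ⨅ k, f i k) + ε := by
      gcongr
      exact ENNReal.mul_div_le

namespace MeasureTheory

section Couplings

variable {α β : Type*} [MeasurableSpace α] [MeasurableSpace β]

def couplings (μ : Measure α) (ν : Measure β) : Set (Measure (α × β)) :=
  {π | IsProbabilityMeasure π ∧ π.map Prod.fst = μ ∧ π.map Prod.snd = ν}

noncomputable def transportCost (c : α × β → ℝ≥0∞) (μ : Measure α) (ν : Measure β) : ℝ≥0∞ :=
  ⨅ π : couplings μ ν, ∫⁻ p, c p ∂(π : Measure (α × β))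

lemma transportCost_le_lintegral (c : α × β → ℝ≥0∞) {μ : Measure α} {ν : Measure β}
    {π : Measure (α × β)} (hπ : π ∈ couplings μ ν) :
    transportCost c μ ν ≤ ∫⁻ p, c p ∂π :=
  iInf_le_of_le ⟨π, hπ⟩ le_rfl

end Couplings

section Pi

variable {ι : Type*} {α β : ι → Type*} [∀ i, MeasurableSpace (α i)] [∀ i, MeasurableSpace (β i)]

lemma measurable_arrowProdEquivProdArrow :
    Measurable (Equiv.arrowProdEquivProdArrow ι α β) :=
  (measurable_pi_lambda _ fun i => (measurable_pi_apply i).fst).prodMk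
    (measurable_pi_lambda _ fun i => (measurable_pi_apply i).snd)

variable [Fintype ι]

lemma lintegral_sum_coord_eq_sum_lintegral_map (Γ : Measure ((∀ i, α i) × (∀ i, β i)))
    {c : ∀ i, α i × β i → ℝ≥0∞} (hc : ∀ i, Measurable (c i)) :
    ∫⁻ p, ∑ i, c i (p.1 i, p.2 i) ∂Γ
      = ∑ i, ∫⁻ q, c i q ∂(Γ.map fun p => (p.1 i, p.2 i)) := by
  calc _ = ∑ i, ∫⁻ p, c i (p.1 i, p.2 i) ∂Γ :=
        lintegral_finsetSum _ fun i _ => (hc i).comp (by fun_prop)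
    _ = _ := Finset.sum_congr rfl fun i _ => (lintegral_map (hc i) (by fun_prop)).symm

lemma map_coord_map_pi_arrowProdEquivProdArrow (π : ∀ i, Measure (α i × β i))
    [∀ i, IsProbabilityMeasure (π i)] (i : ι) :
    ((Measure.pi π).map (Equiv.arrowProdEquivProdArrow ι α β)).map (fun p => (p.1 i, p.2 i))
      = π i := by
  rw [Measure.map_map (by fun_prop) measurable_arrowProdEquivProdArrow]
  exact (measurePreserving_eval π i).map_eq

lemma map_coord_mem_couplings {μ : ∀ i, Measure (α i)} {ν : ∀ i, Measure (β i)}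
    [∀ i, IsProbabilityMeasure (μ i)] [∀ i, IsProbabilityMeasure (ν i)]
    {Γ : Measure ((∀ i, α i) × (∀ i, β i))} (hΓ : Γ ∈ couplings (Measure.pi μ) (Measure.pi ν))
    (i : ι) :
    Γ.map (fun p => (p.1 i, p.2 i)) ∈ couplings (μ i) (ν i) := by
  obtain ⟨_, hfst, hsnd⟩ := hΓ
  refine ⟨Measure.isProbabilityMeasure_map (by fun_prop), ?_, ?_⟩
  · rw [Measure.map_map measurable_fst (by fun_prop),
      ← (measurePreserving_eval μ i).map_eq, ← hfst, Measure.map_map (by fun_prop) measurable_fst]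
    rfl
  · rw [Measure.map_map measurable_snd (by fun_prop),
      ← (measurePreserving_eval ν i).map_eq, ← hsnd, Measure.map_map (by fun_prop) measurable_snd]
    rfl

lemma map_pi_mem_couplings {μ : ∀ i, Measure (α i)} {ν : ∀ i, Measure (β i)}
    {π : ∀ i, Measure (α i × β i)} (hπ : ∀ i, π i ∈ couplings (μ i) (ν i)) :
    (Measure.pi π).map (Equiv.arrowProdEquivProdArrow ι α β)
      ∈ couplings (Measure.pi μ) (Measure.pi ν) := by
  choose hprob hfst hsnd using hπ
  have hμ : ∀ i, IsProbabilityMeasure (μ i) :=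
    fun i => hfst i ▸ Measure.isProbabilityMeasure_map (by fun_prop)
  have hν : ∀ i, IsProbabilityMeasure (ν i) :=
    fun i => hsnd i ▸ Measure.isProbabilityMeasure_map (by fun_prop)
  refine ⟨Measure.isProbabilityMeasure_map measurable_arrowProdEquivProdArrow.aemeasurable, ?_, ?_⟩
  · rw [Measure.map_map measurable_fst measurable_arrowProdEquivProdArrow]
    exact (measurePreserving_pi π μ fun i => ⟨measurable_fst, hfst i⟩).map_eq
  · rw [Measure.map_map measurable_snd measurable_arrowProdEquivProdArrow]
    exact (measurePreserving_pi π ν fun i => ⟨measurable_snd, hsnd i⟩).map_eq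

theorem transportCost_pi {μ : ∀ i, Measure (α i)} {ν : ∀ i, Measure (β i)}
    [∀ i, IsProbabilityMeasure (μ i)] [∀ i, IsProbabilityMeasure (ν i)]
    {c : ∀ i, α i × β i → ℝ≥0∞} (hc : ∀ i, Measurable (c i)) :
    transportCost (fun p : (∀ i, α i) × (∀ i, β i) => ∑ i, c i (p.1 i, p.2 i))
        (Measure.pi μ) (Measure.pi ν) = ∑ i, transportCost (c i) (μ i) (ν i) := by
  apply le_antisymm
  · refine le_trans (le_iInf fun π => ?_) <| ENNReal.iInf_pi_sum_le_sum_iInf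
        fun i (π : couplings (μ i) (ν i)) => ∫⁻ q, c i q ∂(π : Measure (α i × β i))
    have : ∀ i, IsProbabilityMeasure (π i : Measure (α i × β i)) := fun i => (π i).2.1
    refine (transportCost_le_lintegral _ (map_pi_mem_couplings fun i => (π i).2)).trans_eq ?_
    simp only [lintegral_sum_coord_eq_sum_lintegral_map _ hc,
      map_coord_map_pi_arrowProdEquivProdArrow]
  · refine le_iInf fun Γ => ?_
    rw [lintegral_sum_coord_eq_sum_lintegral_map _ hc]
    exact Finset.sum_le_sum fun i _ =>
      transportCost_le_lintegral _ (map_coord_mem_couplings Γ.2 i)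

end Pi

end MeasureTheory

open MeasureTheory

lemma W2sq1_eq_transportCost (μ ν : Measure ℝ) :
    W2sq1 μ ν = transportCost (fun p => ENNReal.ofReal ((p.1 - p.2) ^ 2)) μ ν := by
  simp only [W2sq1, transportCost, couplings, iInf_subtype, Set.mem_ofPred_eq, iInf_and]

lemma W2sqn_eq_transportCost (n : ℕ) (μ ν : Measure (Fin n → ℝ)) :
    W2sqn n μ ν = transportCost
      (fun p : (Fin n → ℝ) × (Fin n → ℝ) => ∑ i, ENNReal.ofReal ((p.1 i - p.2 i) ^ 2)) μ ν := by
  simp only [W2sqn, transportCost, couplings, iInf_subtype, Set.mem_ofPred_eq, iInf_and,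
    ENNReal.ofReal_sum_of_nonneg fun i _ => sq_nonneg _]

theorem W2sq_product_additive_general
    (n : ℕ) (μi νi : Fin n → Measure ℝ)
    [∀ i, IsProbabilityMeasure (μi i)] [∀ i, IsProbabilityMeasure (νi i)] :
    W2sqn n (Measure.pi μi) (Measure.pi νi) = ∑ i : Fin n, W2sq1 (μi i) (νi i) := by
  simp only [W2sqn_eq_transportCost, W2sq1_eq_transportCost]
  exact transportCost_pi (c := fun _ q => ENNReal.ofReal ((q.1 - q.2) ^ 2)) fun _ => by
    fun_prop

/-- For product measures with square-integrable coordinate marginals, the squared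
Wasserstein-2 distance is exactly additive across coordinates. -/
theorem W2sq_product_additive
    (n : ℕ) (μi νi : Fin n → Measure ℝ)
    [∀ i, IsProbabilityMeasure (μi i)] [∀ i, IsProbabilityMeasure (νi i)]
    (hμ2 : ∀ i, MemLp id 2 (μi i)) (hν2 : ∀ i, MemLp id 2 (νi i)) :
    W2sqn n (Measure.pi μi) (Measure.pi νi) = ∑ i : Fin n, W2sq1 (μi i) (νi i) :=
  W2sq_product_additive_general n μi νi
end
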